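/- arXiv:1901.11285 — 7 statements merged into one kernel-verified Lean document; each statement's English description precedes it below -/
import Mathlib

section
/- Let G be a finite simple graph, let (T,B) be a tree decomposition of G, and let U be any subset of V(G). Then there exists a node t of T such that the bag B(t) is a vertex separator of U in G, i.e., every connected component of the induced subgraph G[V(G) \ B(t)] contains at most |U|/2 vertices of U. -/
/-- A tree decomposition of a graph `G`: a finite tree together with bags
satisfying the three standard conditions. -/
structure TreeDecomposition {V : Type*} (G : SimpleGraph V) where
  /-- the index type of the nodes of the tree -/
  ι : Type
  /-- the tree has finitely many nodes -/
  instFintype : Fintype ι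
  /-- the underlying tree -/
  tree : SimpleGraph ι
  /-- the underlying graph is a tree -/
  tree_isTree : tree.IsTree
  /-- the bag labelling -/
  bag : ι → Set V
  /-- every vertex of `G` lies in some bag -/
  bag_cover : ∀ v : V, ∃ t : ι, v ∈ bag t
  /-- for every edge of `G` some bag contains both endpoints -/
  bag_adj : ∀ ⦃u v : V⦄, G.Adj u v → ∃ t : ι, u ∈ bag t ∧ v ∈ bag t
  /-- if `t3` lies on the path between `t1` and `t2` then `bag t1 ∩ bag t2 ⊆ bag t3` -/
  bag_path : ∀ (t1 t2 t3 : ι) (p : tree.Walk t1 t2), p.IsPath → t3 ∈ p.support →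
    bag t1 ∩ bag t2 ⊆ bag t3

/-- `S` is a vertex separator of `U` in `G`: every connected component of
`G[V \ S]` contains at most `|U|/2` vertices of `U`. -/
def IsVertexSeparator {V : Type*} (G : SimpleGraph V) (U S : Set V) : Prop :=
  ∀ c : (G.induce (Sᶜ : Set V)).ConnectedComponent,
    2 * {v : ↥(Sᶜ : Set V) |
      (G.induce (Sᶜ : Set V)).connectedComponentMk v = c ∧ (v : V) ∈ U}.ncard ≤ U.ncard

/-!
Suppose no bag separates `U`. For each node `t`, some component of `G - B(t)` contains more than
half of `U`; by the path condition, every node whose bag meets that component lies in the same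
branch of `T - t`, entered through a neighbour `f t`. A tree has fewer edges than nodes, so
`f (f t) = t` for some `t`. The heavy components at `t` and at `f t` share a vertex `x` of `U`, and a
node whose bag contains `x` is then reachable from `f t` avoiding `t` and from `t` avoiding `f t`:
impossible, since every edge of a tree is a bridge.
-/

namespace SimpleGraph

variable {ι : Type*} {T : SimpleGraph ι}

def ReachableAvoiding (T : SimpleGraph ι) (t a b : ι) : Prop :=
  ∃ p : T.Walk a b, t ∉ p.support

theorem ReachableAvoiding.symm {t a b : ι} (h : T.ReachableAvoiding t a b) :
    T.ReachableAvoiding t b a := by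
  obtain ⟨p, hp⟩ := h
  exact ⟨p.reverse, by simpa using hp⟩

theorem ReachableAvoiding.trans {t a b c : ι} (hab : T.ReachableAvoiding t a b)
    (hbc : T.ReachableAvoiding t b c) : T.ReachableAvoiding t a c := by
  obtain ⟨p, hp⟩ := hab
  obtain ⟨q, hq⟩ := hbc
  refine ⟨p.append q, ?_⟩
  rw [Walk.support_append, List.mem_append, not_or]
  exact ⟨hp, fun h => hq (List.mem_of_mem_tail h)⟩

theorem Connected.exists_adj_reachableAvoiding (hT : T.Connected) {t s : ι} (hne : s ≠ t) :
    ∃ t', T.Adj t t' ∧ T.ReachableAvoiding t s t' := by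
  classical
  obtain ⟨p⟩ := hT.preconnected t s
  obtain ⟨t', hadj, q, hq⟩ := Walk.exists_eq_cons_of_ne hne.symm p.bypass
  have hpath : (Walk.cons hadj q).IsPath := hq ▸ p.bypass_isPath
  exact ⟨t', hadj, ReachableAvoiding.symm ⟨q, (Walk.cons_isPath_iff hadj q).1 hpath |>.2⟩⟩

theorem IsAcyclic.not_reachableAvoiding_and (hT : T.IsAcyclic) {t t' s : ι} (hadj : T.Adj t t') :
    ¬ (T.ReachableAvoiding t s t' ∧ T.ReachableAvoiding t' s t) := by
  rintro ⟨⟨p, hp⟩, ⟨q, hq⟩⟩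
  have hedge := isBridge_iff_forall_walk_mem_edges.1 (isAcyclic_iff_forall_adj_isBridge.1 hT hadj)
    (q.reverse.append p)
  rcases List.mem_append.1 (Walk.edges_append _ _ ▸ hedge) with h | h
  · exact hq (by simpa using q.reverse.snd_mem_support_of_mem_edges h)
  · exact hp (p.fst_mem_support_of_mem_edges h)

theorem IsTree.exists_apply_apply_eq [Finite ι] (hT : T.IsTree) (f : ι → ι)
    (hf : ∀ t, T.Adj t (f t)) : ∃ t, f (f t) = t := by
  classical
  have := Fintype.ofFinite ι
  have hcard : Fintype.card T.edgeSet < Fintype.card ι := by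
    have := hT.card_edgeFinset
    rw [edgeFinset_card] at this
    omega
  obtain ⟨t, t', hne, heq⟩ := Fintype.exists_ne_map_eq_of_card_lt
    (fun t => (⟨s(t, f t), T.mem_edgeSet.2 (hf t)⟩ : T.edgeSet)) hcard
  rcases Sym2.eq_iff.1 (congrArg Subtype.val heq) with ⟨h, -⟩ | ⟨h, h'⟩
  · exact absurd h hne
  · exact ⟨t, by rw [h', h]⟩

end SimpleGraph

theorem Set.inter_nonempty_of_ncard_lt_ncard_add_ncard {α : Type*} {s t u : Set α}
    (hts : t ⊆ s) (hus : u ⊆ s) (hs : s.Finite) (hstu : s.ncard < t.ncard + u.ncard) :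
    (t ∩ u).Nonempty := by
  rw [Set.nonempty_iff_ne_empty]
  intro h
  have hunion := Set.ncard_inter_add_ncard_union t u (hs.subset hts) (hs.subset hus)
  have hle := Set.ncard_le_ncard (Set.union_subset hts hus) hs
  rw [h, Set.ncard_empty] at hunion
  omega

namespace TreeDecomposition

open SimpleGraph

variable {V : Type*} {G : SimpleGraph V} (D : TreeDecomposition G)

theorem reachableAvoiding_of_mem_bag {t s₁ s₂ : D.ι} {v : V} (hv : v ∉ D.bag t)
    (h₁ : v ∈ D.bag s₁) (h₂ : v ∈ D.bag s₂) : D.tree.ReachableAvoiding t s₁ s₂ := by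
  classical
  obtain ⟨p⟩ := D.tree_isTree.1.preconnected s₁ s₂
  exact ⟨p.bypass, fun ht => hv (D.bag_path s₁ s₂ t p.bypass p.bypass_isPath ht ⟨h₁, h₂⟩)⟩

theorem reachableAvoiding_of_reachable {t s₁ s₂ : D.ι} {u w : ↥(D.bag t)ᶜ}
    (h : (G.induce (D.bag t)ᶜ).Reachable u w) (hu : (u : V) ∈ D.bag s₁)
    (hw : (w : V) ∈ D.bag s₂) : D.tree.ReachableAvoiding t s₁ s₂ := by
  obtain ⟨p⟩ := h
  induction p generalizing s₁ with
  | @nil x => exact D.reachableAvoiding_of_mem_bag x.2 hu hw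
  | @cons a b _ hab _ ih =>
    obtain ⟨s, has, hbs⟩ := D.bag_adj (induce_adj.1 hab)
    exact (D.reachableAvoiding_of_mem_bag a.2 hu has).trans (ih hbs hw)

theorem exists_adj_reachableAvoiding_of_connectedComponent (t : D.ι)
    (c : (G.induce (D.bag t)ᶜ).ConnectedComponent) :
    ∃ t', D.tree.Adj t t' ∧
      ∀ v ∈ c.supp, ∀ s, (v : V) ∈ D.bag s → D.tree.ReachableAvoiding t s t' := by
  obtain ⟨v₀, rfl⟩ := c.exists_rep
  obtain ⟨s₀, hs₀⟩ := D.bag_cover v₀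
  have hne : s₀ ≠ t := by rintro rfl; exact v₀.2 hs₀
  obtain ⟨t', hadj, hs₀t'⟩ := D.tree_isTree.1.exists_adj_reachableAvoiding hne
  refine ⟨t', hadj, fun v hv s hs => ?_⟩
  exact (D.reachableAvoiding_of_reachable (ConnectedComponent.exact hv) hs hs₀).trans hs₀t'

end TreeDecomposition

theorem exists_heavy_connectedComponent_of_not_isVertexSeparator {V : Type*}
    {G : SimpleGraph V} {U S : Set V} (h : ¬ IsVertexSeparator G U S) :
    ∃ c : (G.induce Sᶜ).ConnectedComponent, U.ncard < 2 * (U ∩ Subtype.val '' c.supp).ncard := by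
  simp only [IsVertexSeparator, not_forall, not_le] at h
  obtain ⟨c, hc⟩ := h
  refine ⟨c, ?_⟩
  rwa [Set.inter_comm, ← Set.image_inter_preimage,
    Set.ncard_image_of_injective _ Subtype.val_injective]

theorem exists_bag_separator {V : Type*} [Fintype V] (G : SimpleGraph V)
    (D : TreeDecomposition G) (U : Set V) :
    ∃ t : D.ι, IsVertexSeparator G U (D.bag t) := by
  have := D.instFintype
  by_contra! h
  choose c hc using fun t => exists_heavy_connectedComponent_of_not_isVertexSeparator (h t)
  choose f hadj hf using fun t => D.exists_adj_reachableAvoiding_of_connectedComponent t (c t)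
  obtain ⟨t, hfft⟩ := D.tree_isTree.exists_apply_apply_eq f hadj
  obtain ⟨_, ⟨-, v, hv, rfl⟩, ⟨-, v', hv', hvv'⟩⟩ :
      (U ∩ Subtype.val '' (c t).supp ∩ (U ∩ Subtype.val '' (c (f t)).supp)).Nonempty :=
    Set.inter_nonempty_of_ncard_lt_ncard_add_ncard Set.inter_subset_left Set.inter_subset_left
      U.toFinite (by have := hc t; have := hc (f t); omega)
  obtain ⟨s, hs⟩ := D.bag_cover v
  refine D.tree_isTree.isAcyclic.not_reachableAvoiding_and (hadj t) ⟨hf t v hv s hs, ?_⟩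
  simpa only [hfft] using hf (f t) v' hv' s (hvv' ▸ hs)
end

section
/- Let G be a finite simple graph on n ≥ 1 vertices that admits a tree decomposition in which every bag has at most w+1 vertices. Then G admits a rooted tree decomposition (T', B') in which every bag has at most 6w+6 vertices and whose depth is at most ⌈log₂ n⌉. -/
open SimpleGraph
open scoped Finset
namespace SimpleGraph

variable {α β : Type*} {G : SimpleGraph α} {H : SimpleGraph β} {X Y : Set α} {a b x : α}

/-- The subgraph induced on `X`, kept on all of `α`: vertices outside `X` are isolated, yet
still reachable from themselves. -/
def restrict (G : SimpleGraph α) (X : Set α) : SimpleGraph α where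
  Adj x y := G.Adj x y ∧ x ∈ X ∧ y ∈ X
  symm := ⟨fun _ _ h => ⟨h.1.symm, h.2.2, h.2.1⟩⟩
  loopless := ⟨fun _ h => h.1.ne rfl⟩

@[simp] lemma restrict_adj {y : α} : (G.restrict X).Adj x y ↔ G.Adj x y ∧ x ∈ X ∧ y ∈ X := Iff.rfl

lemma restrict_le : G.restrict X ≤ G := fun _ _ h => h.1

lemma restrict_mono (h : X ⊆ Y) : G.restrict X ≤ G.restrict Y :=
  fun _ _ hab => ⟨hab.1, h hab.2.1, h hab.2.2⟩

lemma Walk.mem_of_mem_support_restrict (q : (G.restrict X).Walk a b) (ha : a ∈ X)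
    (hx : x ∈ q.support) : x ∈ X := by
  induction q with
  | nil => simp_all
  | cons h q ih =>
    rw [Walk.support_cons, List.mem_cons] at hx
    exact hx.elim (· ▸ ha) (ih h.2.2)

lemma Walk.reachable_restrict (p : G.Walk a b) (hp : ∀ x ∈ p.support, x ∈ X) :
    (G.restrict X).Reachable a b := by
  induction p with
  | nil => rfl
  | cons h p ih =>
    simp only [Walk.support_cons, List.mem_cons, forall_eq_or_imp] at hp
    exact (restrict_adj.2 ⟨h, hp.1, hp.2 _ p.start_mem_support⟩).reachable.trans (ih hp.2)

lemma Reachable.map_restrict {Y : Set β} {f : α → β} (hf : ∀ ⦃a b⦄, G.Adj a b → H.Adj (f a) (f b))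
    (hX : ∀ a ∈ X, f a ∈ Y) (h : (G.restrict X).Reachable a b) :
    (H.restrict Y).Reachable (f a) (f b) :=
  h.map (G := G.restrict X) (G' := H.restrict Y)
    ⟨f, fun hab => restrict_adj.2 ⟨hf hab.1, hX _ hab.2.1, hX _ hab.2.2⟩⟩

/-- The path `p` is the bypass of any walk inside `X`. -/
lemma IsAcyclic.mem_of_mem_support (hG : G.IsAcyclic) (h : (G.restrict X).Reachable a b)
    (ha : a ∈ X) {p : G.Walk a b} (hp : p.IsPath) (hx : x ∈ p.support) : x ∈ X := by
  classical
  obtain ⟨q⟩ := h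
  have hpq : p = (q.mapLe restrict_le).bypass :=
    congrArg Subtype.val ((hG.subsingleton_path _ _).elim ⟨p, hp⟩ ⟨_, Walk.bypass_isPath _⟩)
  rw [hpq] at hx
  have hx' := Walk.support_bypass_subset_support _ hx
  rw [Walk.support_mapLe_eq_support] at hx'
  exact q.mem_of_mem_support_restrict ha hx'

end SimpleGraph

/-- A finite rooted tree given by its parent map; `depth` certifies that iterating `parent`
reaches `root`. -/
structure ParentTree where
  ι : Type
  [finite : Finite ι]
  root : ι
  parent : ι → ι
  depth : ι → ℕ
  parent_root : parent root = root
  depth_root : depth root = 0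
  depth_parent : ∀ t, t ≠ root → depth (parent t) + 1 = depth t

namespace ParentTree

attribute [instance] ParentTree.finite

variable (T : ParentTree)

def graph : SimpleGraph T.ι := fromRel fun a b => T.parent a = b

lemma exists_walk_to_root (t : T.ι) : ∃ p : T.graph.Walk t T.root, p.length = T.depth t := by
  induction hd : T.depth t generalizing t with
  | zero =>
    obtain rfl : t = T.root := by
      by_contra ht
      have := T.depth_parent t ht
      omega
    exact ⟨.nil, rfl⟩
  | succ n ih =>
    have ht : t ≠ T.root := by rintro rfl; simp [T.depth_root] at hd
    have hpar := T.depth_parent t ht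
    have hadj : T.graph.Adj t (T.parent t) :=
      ⟨fun h => by rw [← h] at hpar; omega, Or.inl rfl⟩
    obtain ⟨p, hp⟩ := ih (T.parent t) (by omega)
    exact ⟨.cons hadj p, by simp [hp]⟩

lemma connected : T.graph.Connected := by
  have : Nonempty T.ι := ⟨T.root⟩
  refine ⟨fun a b => ?_⟩
  obtain ⟨p, -⟩ := T.exists_walk_to_root a
  obtain ⟨q, -⟩ := T.exists_walk_to_root b
  exact p.reachable.trans q.reachable.symm

lemma dist_root_le (t : T.ι) : T.graph.dist T.root t ≤ T.depth t := by
  obtain ⟨p, hp⟩ := T.exists_walk_to_root t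
  rw [dist_comm, ← hp]
  exact dist_le p

variable {T} in
lemma parent_eq_of_adj {a b : T.ι} (hadj : T.graph.Adj a b) (hd : T.depth b ≤ T.depth a) :
    T.parent a = b := by
  obtain ⟨hne, h | h⟩ := hadj
  · exact h
  · have hb : b ≠ T.root := by
      rintro rfl
      exact hne (T.parent_root ▸ h).symm
    have := T.depth_parent b hb
    rw [h] at this
    omega

/-- Both neighbours of a deepest vertex of a cycle would have to be its parent. -/
lemma isAcyclic : T.graph.IsAcyclic := by
  intro v c hc
  classical
  obtain ⟨m, hm, hmax⟩ := c.support.toFinset.exists_max_image T.depth ⟨v, by simp⟩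
  simp only [List.mem_toFinset] at hm hmax
  have hc' := hc.rotate hm
  have hmax' : ∀ x ∈ (c.rotate m hm).support, T.depth x ≤ T.depth m := fun x hx =>
    hmax x ((c.mem_support_rotate_iff m hm).1 hx)
  have hnil := hc'.not_nil
  have h1 := parent_eq_of_adj (Walk.adj_snd hnil) (hmax' _ (Walk.getVert_mem_support _ _))
  have h2 := parent_eq_of_adj (Walk.adj_penultimate hnil).symm
    (hmax' _ (Walk.getVert_mem_support _ _))
  exact hc'.snd_ne_penultimate (h1.symm.trans h2)

lemma isTree : T.graph.IsTree := ⟨T.connected, T.isAcyclic⟩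

open Classical in
noncomputable def join {κ : Type} [Finite κ] (T : κ → ParentTree) : ParentTree where
  ι := Option (Σ i, (T i).ι)
  root := none
  parent t := t.elim none fun s =>
    if s.2 = (T s.1).root then none else some ⟨s.1, (T s.1).parent s.2⟩
  depth t := t.elim 0 fun s => (T s.1).depth s.2 + 1
  parent_root := rfl
  depth_root := rfl
  depth_parent := by
    rintro (_ | ⟨i, s⟩) ht
    · exact absurd rfl ht
    · by_cases hs : s = (T i).root
      · simp [hs, (T i).depth_root]
      · simp [hs, ← (T i).depth_parent s hs]

variable {κ : Type} [Finite κ] {T : κ → ParentTree}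

lemma join_adj_some {i : κ} {a b : (T i).ι} (hab : (T i).graph.Adj a b) :
    (join T).graph.Adj (some ⟨i, a⟩ : Option (Σ i, (T i).ι)) (some ⟨i, b⟩) := by
  obtain ⟨hne, h⟩ := hab
  have hroot {a b : (T i).ι} (hne : a ≠ b) (h : (T i).parent a = b) : a ≠ (T i).root := by
    rintro rfl
    exact hne ((T i).parent_root ▸ h)
  refine ⟨(Option.some_injective _).ne (sigma_mk_injective.ne hne), ?_⟩
  rcases h with h | h
  · exact Or.inl (by simp [join, hroot hne h, h])
  · exact Or.inr (by simp [join, hroot hne.symm h, h])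

lemma join_adj_root (i : κ) :
    (join T).graph.Adj (some ⟨i, (T i).root⟩ : Option (Σ i, (T i).ι)) none :=
  ⟨Option.some_ne_none _, Or.inl (by simp [join])⟩

end ParentTree

namespace SimpleGraph

variable {ι : Type*} {T : SimpleGraph ι}

lemma IsTree.dist_eq_length (hT : T.IsTree) {a b : ι} {p : T.Walk a b} (hp : p.IsPath) :
    T.dist a b = p.length := by
  obtain ⟨q, hq, hlen⟩ := hT.connected.exists_path_of_dist a b
  have hpq : p = q :=
    congrArg Subtype.val ((hT.isAcyclic.subsingleton_path a b).elim ⟨p, hp⟩ ⟨q, hq⟩)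
  rw [← hlen, hpq]

lemma IsTree.dist_eq_dist_add_one_iff (hT : T.IsTree) {t u j : ι} (hadj : T.Adj t u) :
    T.dist t j = T.dist u j + 1 ↔ (T.restrict {t}ᶜ).Reachable u j := by
  classical
  obtain ⟨q, hq, hlen⟩ := hT.connected.exists_path_of_dist u j
  constructor
  · intro h
    refine q.reachable_restrict fun x hx hxt => ?_
    rw [Set.mem_singleton_iff] at hxt
    subst hxt
    have := dist_le (q.dropUntil x hx)
    have := q.length_dropUntil_le_length hx
    omega
  · intro h
    have ht : t ∉ q.support := fun ht =>
      hT.isAcyclic.mem_of_mem_support h (by simpa using hadj.ne.symm) hq ht rfl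
    rw [hT.dist_eq_length (hq.cons ht (h := hadj)), Walk.length_cons, hlen]

open Classical in
/-- A vertex minimising the total weighted distance to all vertices is a weighted centroid:
moving across an edge, this potential drops by the weight on the far side and rises by the weight
on the near side. -/
lemma IsTree.exists_centroid [Fintype ι] (hT : T.IsTree) (ω : ι → ℕ) :
    ∃ t₀, ∀ x ≠ t₀, 2 * ∑ j with (T.restrict {t₀}ᶜ).Reachable x j, ω j ≤ ∑ j, ω j := by
  have : Nonempty ι := hT.connected.nonempty
  obtain ⟨t₀, -, hmin⟩ := Finset.univ.exists_min_image (fun t => ∑ j, ω j * T.dist t j)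
    Finset.univ_nonempty
  set R := (T.restrict {t₀}ᶜ).Reachable
  have hneighbour : ∀ u, T.Adj t₀ u → 2 * ∑ j with R u j, ω j ≤ ∑ j, ω j := by
    intro u hadj
    have hpt (j : ι) : ω j * T.dist t₀ j + (if ¬ R u j then ω j else 0) =
        ω j * T.dist u j + (if R u j then ω j else 0) := by
      by_cases hj : R u j
      · simp [hj, (hT.dist_eq_dist_add_one_iff hadj).2 hj, mul_add]
      · have hside := (hT.dist_eq_dist_add_one_iff hadj).not.2 hj
        have := hT.dist_eq_dist_add_one_of_adj j hadj
        rw [dist_comm (u := j), dist_comm (u := j) (v := u)] at this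
        simp [hj, show T.dist u j = T.dist t₀ j + 1 by omega, mul_add]
    have hsum := Finset.sum_congr rfl fun j (_ : j ∈ Finset.univ) => hpt j
    rw [Finset.sum_add_distrib, Finset.sum_add_distrib, ← Finset.sum_filter,
      ← Finset.sum_filter] at hsum
    have := Finset.sum_filter_add_sum_filter_not Finset.univ (R u) ω
    have := hmin u (Finset.mem_univ u)
    omega
  refine ⟨t₀, fun x hx => ?_⟩
  obtain ⟨p, hp, -⟩ := hT.connected.exists_path_of_dist t₀ x
  cases p with
  | nil => exact absurd rfl hx
  | @cons _ u _ hadj q =>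
    rw [Walk.cons_isPath_iff] at hp
    have hux : R u x :=
      q.reachable_restrict fun y hy hyt => hp.2 (Set.mem_singleton_iff.1 hyt ▸ hy)
    rw [Finset.filter_congr fun j _ => ⟨hux.trans, hux.symm.trans⟩]
    exact hneighbour u hadj

end SimpleGraph

section TreeDecompositions

variable {V : Type*} {G : SimpleGraph V}

/-- Every component of `G - S` contains at most half of `A`. -/
def IsBalancedSeparator (G : SimpleGraph V) (S A : Set V) : Prop :=
  ∀ x ∉ S, 2 * ({y | (G.restrict Sᶜ).Reachable x y} ∩ A).ncard ≤ A.ncard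

lemma IsBalancedSeparator.mono [Finite V] {S S' A : Set V} (hA : IsBalancedSeparator G S A)
    (hS : S ⊆ S') : IsBalancedSeparator G S' A := by
  intro x hx
  refine le_trans ?_ (hA x fun h => hx (hS h))
  gcongr 2 * ?_
  refine Set.ncard_le_ncard (Set.inter_subset_inter_left _ fun y hy => ?_)
  exact hy.mono (restrict_mono (Set.compl_subset_compl.2 hS))

namespace TreeDecomposition

variable (D : TreeDecomposition G)

lemma reachable_of_mem_bag {t₀ t t' : D.ι} {v : V} (hv : v ∉ D.bag t₀) (ht : v ∈ D.bag t)
    (ht' : v ∈ D.bag t') : (D.tree.restrict {t₀}ᶜ).Reachable t t' := by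
  obtain ⟨p, hp⟩ := D.tree_isTree.connected.exists_isPath t t'
  exact p.reachable_restrict fun s hs hst =>
    hv (Set.mem_singleton_iff.1 hst ▸ D.bag_path t t' s p hp hs ⟨ht, ht'⟩)

lemma reachable_of_reachable_restrict {t₀ t t' : D.ι} {x y : V}
    (hxy : (G.restrict (D.bag t₀)ᶜ).Reachable x y) (hx : x ∉ D.bag t₀) (ht : x ∈ D.bag t)
    (ht' : y ∈ D.bag t') : (D.tree.restrict {t₀}ᶜ).Reachable t t' := by
  obtain ⟨q⟩ := hxy
  induction q generalizing t with
  | nil => exact D.reachable_of_mem_bag hx ht ht'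
  | cons h q ih =>
    obtain ⟨hadj, -, hy⟩ := restrict_adj.1 h
    obtain ⟨s, hxs, hys⟩ := D.bag_adj hadj
    exact (D.reachable_of_mem_bag hx ht hxs).trans (ih hy hys ht')

/-- A bag at a centroid of the tree, for the weights counting the vertices of `A` assigned to
each node, separates `A` in a balanced way. -/
lemma exists_isBalancedSeparator_bag [Fintype V] (A : Set V) :
    ∃ t, IsBalancedSeparator G (D.bag t) A := by
  classical
  have := D.instFintype
  choose φ hφ using D.bag_cover
  obtain ⟨t₀, ht₀⟩ := D.tree_isTree.exists_centroid fun j => #{v ∈ A.toFinset | φ v = j}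
  refine ⟨t₀, fun x hx => ?_⟩
  have hφx : φ x ≠ t₀ := fun h => hx (h ▸ hφ x)
  set J : Finset D.ι := {j | (D.tree.restrict {t₀}ᶜ).Reachable (φ x) j}
  calc 2 * ({y | (G.restrict (D.bag t₀)ᶜ).Reachable x y} ∩ A).ncard
      ≤ 2 * #{v ∈ A.toFinset | φ v ∈ J} := by
        rw [Set.ncard_eq_toFinset_card']
        gcongr 2 * ?_
        refine Finset.card_le_card fun y hy => ?_
        simp only [Set.mem_toFinset, Set.mem_inter_iff, Set.mem_ofPred_eq] at hy
        simpa [J, hy.2] using D.reachable_of_reachable_restrict hy.1 hx (hφ x) (hφ y)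
    _ = 2 * ∑ j ∈ J, #{v ∈ A.toFinset | φ v = j} := by
        rw [Finset.sum_card_fiberwise_eq_card_filter A.toFinset J φ]
    _ ≤ ∑ j, #{v ∈ A.toFinset | φ v = j} := ht₀ _ hφx
    _ = A.ncard := by
        rw [Finset.sum_card_fiberwise_eq_card_filter A.toFinset _ φ, Set.ncard_eq_toFinset_card']
        simp

lemma exists_isBalancedSeparator [Fintype V] {k : ℕ} (hD : ∀ t, (D.bag t).ncard ≤ k)
    (A B : Set V) :
    ∃ S : Set V, S.ncard ≤ 2 * k ∧ IsBalancedSeparator G S A ∧ IsBalancedSeparator G S B := by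
  obtain ⟨s, hs⟩ := D.exists_isBalancedSeparator_bag A
  obtain ⟨t, ht⟩ := D.exists_isBalancedSeparator_bag B
  refine ⟨D.bag s ∪ D.bag t, ?_, hs.mono Set.subset_union_left, ht.mono Set.subset_union_right⟩
  have := Set.ncard_union_le (D.bag s) (D.bag t)
  have := hD s
  have := hD t
  omega

end TreeDecomposition

/-- A rooted tree decomposition of `G[C ∪ Z]` that only has to cover the vertices of `C` and the
edges at `C`, has bags of size at most `b` and depth at most `d`, and holds `Z` in its root bag. -/
structure RootedDecomposition (G : SimpleGraph V) (b d : ℕ) (C Z : Set V) where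
  tree : ParentTree
  bag : tree.ι → Set V
  depth_le : ∀ t, tree.depth t ≤ d
  bag_subset : ∀ t, bag t ⊆ C ∪ Z
  ncard_bag_le : ∀ t, (bag t).ncard ≤ b
  subset_bag_root : Z ⊆ bag tree.root
  exists_mem_bag : ∀ v ∈ C, ∃ t, v ∈ bag t
  exists_adj_mem_bag : ∀ ⦃u v⦄, G.Adj u v → u ∈ C → ∃ t, u ∈ bag t ∧ v ∈ bag t
  reachable : ∀ v t t', v ∈ bag t → v ∈ bag t' →
    (tree.graph.restrict {s | v ∈ bag s}).Reachable t t'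

namespace RootedDecomposition

variable {b d : ℕ} {C Z R : Set V} {κ : Type} [Finite κ] {Cs Zs : κ → Set V} {ds : κ → ℕ}
  (P : ∀ i, RootedDecomposition G b (ds i) (Cs i) (Zs i))

def joinBag (R : Set V) : (ParentTree.join fun i => (P i).tree).ι → Set V :=
  fun t => t.elim R fun s => (P s.1).bag s.2

lemma reachable_joinBag_some {v : V} {i : κ} {s s' : (P i).tree.ι} (hs : v ∈ (P i).bag s)
    (hs' : v ∈ (P i).bag s') :
    ((ParentTree.join fun i => (P i).tree).graph.restrict {t | v ∈ joinBag P R t}).Reachable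
      (some ⟨i, s⟩) (some ⟨i, s'⟩) :=
  ((P i).reachable v s s' hs hs').map_restrict (f := fun s => some (Sigma.mk i s))
    (fun _ _ h => ParentTree.join_adj_some h) fun _ h => h

lemma reachable_joinBag_none {v : V} {i : κ} {s : (P i).tree.ι} (hCR : Disjoint (Cs i) R)
    (hs : v ∈ (P i).bag s) (hvR : v ∈ R) :
    ((ParentTree.join fun i => (P i).tree).graph.restrict {t | v ∈ joinBag P R t}).Reachable
      (some ⟨i, s⟩) none := by
  have hvZ : v ∈ Zs i :=
    ((P i).bag_subset s hs).resolve_left fun hvC => Set.disjoint_left.1 hCR hvC hvR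
  have hroot := (P i).subset_bag_root hvZ
  exact (reachable_joinBag_some P hs hroot).trans
    (restrict_adj.2 ⟨ParentTree.join_adj_root i, hroot, hvR⟩).reachable

noncomputable def join (hd : ∀ i, ds i + 1 ≤ d) (hR : R ⊆ C ∪ Z) (hRb : R.ncard ≤ b) (hZR : Z ⊆ R)
    (hsub : ∀ i, Cs i ∪ Zs i ⊆ C ∪ Z) (hcover : ∀ v ∈ C, v ∈ R ∨ ∃ i, v ∈ Cs i)
    (hadj : ∀ ⦃u v⦄, G.Adj u v → u ∈ C → u ∈ R ∧ v ∈ R ∨ ∃ i, u ∈ Cs i ∨ v ∈ Cs i)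
    (hCR : ∀ i, Disjoint (Cs i) R) (hshared : ∀ i j, i ≠ j → (Cs i ∪ Zs i) ∩ (Cs j ∪ Zs j) ⊆ R) :
    RootedDecomposition G b d C Z where
  tree := ParentTree.join fun i => (P i).tree
  bag := joinBag P R
  depth_le
    | none => Nat.zero_le d
    | some ⟨i, s⟩ => (Nat.add_le_add_right ((P i).depth_le s) 1).trans (hd i)
  bag_subset
    | none => hR
    | some ⟨i, s⟩ => ((P i).bag_subset s).trans (hsub i)
  ncard_bag_le
    | none => hRb
    | some ⟨i, s⟩ => (P i).ncard_bag_le s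
  subset_bag_root := hZR
  exists_mem_bag v hv := by
    rcases hcover v hv with hvR | ⟨i, hvC⟩
    · exact ⟨none, hvR⟩
    · obtain ⟨s, hs⟩ := (P i).exists_mem_bag v hvC
      exact ⟨some ⟨i, s⟩, hs⟩
  exists_adj_mem_bag u v huv hu := by
    rcases hadj huv hu with h | ⟨i, hu | hv⟩
    · exact ⟨none, h⟩
    · obtain ⟨s, hs⟩ := (P i).exists_adj_mem_bag huv hu
      exact ⟨some ⟨i, s⟩, hs⟩
    · obtain ⟨s, hvs, hus⟩ := (P i).exists_adj_mem_bag huv.symm hv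
      exact ⟨some ⟨i, s⟩, hus, hvs⟩
  reachable v
    | none, none, _, _ => .rfl
    | some ⟨i, s⟩, none, hs, hvR => reachable_joinBag_none P (hCR i) hs hvR
    | none, some ⟨i, s⟩, hvR, hs => (reachable_joinBag_none P (hCR i) hs hvR).symm
    | some ⟨i, s⟩, some ⟨j, s'⟩, hs, hs' => by
      by_cases hij : i = j
      · subst hij
        exact reachable_joinBag_some P hs hs'
      · have hvR := hshared i j hij ⟨(P i).bag_subset s hs, (P j).bag_subset s' hs'⟩
        exact (reachable_joinBag_none P (hCR i) hs hvR).trans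
          (reachable_joinBag_none P (hCR j) hs' hvR).symm

end RootedDecomposition

section Separation

variable (G) (S C Z : Set V) {c : (G.restrict Sᶜ).ConnectedComponent}

def sepInterior (c : (G.restrict Sᶜ).ConnectedComponent) : Set V :=
  {y | y ∈ C ∧ y ∉ S ∧ (G.restrict Sᶜ).connectedComponentMk y = c}

/-- The `Z` of the recursive call on `sepInterior G S C c`: it contains all neighbours of that
set outside it. -/
def sepBoundary (c : (G.restrict Sᶜ).ConnectedComponent) : Set V :=
  S ∩ (C ∪ Z) ∪ {y | y ∈ Z ∧ (G.restrict Sᶜ).connectedComponentMk y = c}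

variable {G S C Z}

lemma sepInterior_union_sepBoundary_subset :
    sepInterior G S C c ∪ sepBoundary G S C Z c ⊆ C ∪ Z := by
  rintro y (⟨hC, -⟩ | ⟨-, h⟩ | ⟨hZ, -⟩)
  exacts [Or.inl hC, h, Or.inr hZ]

lemma mem_of_mem_sepInterior_union_sepBoundary {y : V}
    (hy : y ∈ sepInterior G S C c ∪ sepBoundary G S C Z c) :
    y ∈ S ∩ (C ∪ Z) ∨ (G.restrict Sᶜ).connectedComponentMk y = c := by
  rcases hy with ⟨-, -, h⟩ | h | ⟨-, h⟩
  exacts [Or.inr h, Or.inl h, Or.inr h]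

lemma disjoint_sepInterior_sepBoundary (hCZ : Disjoint C Z) :
    Disjoint (sepInterior G S C c) (sepBoundary G S C Z c) := by
  rw [Set.disjoint_left]
  rintro y ⟨hC, hS, -⟩ (⟨hS', -⟩ | ⟨hZ, -⟩)
  exacts [hS hS', Set.disjoint_left.1 hCZ hC hZ]

lemma sepInterior_subset_reachable {x : V} (hx : x ∈ sepInterior G S C c) :
    sepInterior G S C c ⊆ {y | (G.restrict Sᶜ).Reachable x y} ∩ C := fun _ hy =>
  ⟨ConnectedComponent.exact (hx.2.2.trans hy.2.2.symm), hy.1⟩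

lemma two_mul_ncard_sepInterior_le [Finite V] (hSC : IsBalancedSeparator G S C)
    (hc : (sepInterior G S C c).Nonempty) : 2 * (sepInterior G S C c).ncard ≤ C.ncard := by
  obtain ⟨x, hx⟩ := hc
  refine le_trans ?_ (hSC x hx.2.1)
  gcongr 2 * ?_
  exact Set.ncard_le_ncard (sepInterior_subset_reachable hx)

lemma ncard_sepBoundary_le [Finite V] {s : ℕ} (hS : S.ncard ≤ s) (hZ : Z.ncard ≤ 2 * s)
    (hSZ : IsBalancedSeparator G S Z) (hc : (sepInterior G S C c).Nonempty) :
    (sepBoundary G S C Z c).ncard ≤ 2 * s := by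
  obtain ⟨x, hx⟩ := hc
  have hZc : {y | y ∈ Z ∧ (G.restrict Sᶜ).connectedComponentMk y = c} =
      {y | (G.restrict Sᶜ).Reachable x y} ∩ Z := by
    ext y
    simp only [Set.mem_ofPred_eq, Set.mem_inter_iff, ← hx.2.2, ConnectedComponent.eq]
    exact ⟨fun h => ⟨h.2.symm, h.1⟩, fun h => ⟨h.2, h.1.symm⟩⟩
  have hZhalf := hSZ x hx.2.1
  calc (sepBoundary G S C Z c).ncard
      ≤ (S ∩ (C ∪ Z)).ncard + ({y | (G.restrict Sᶜ).Reachable x y} ∩ Z).ncard := by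
        rw [sepBoundary, hZc]
        exact Set.ncard_union_le _ _
    _ ≤ s + s := by
        gcongr
        · exact (Set.ncard_le_ncard Set.inter_subset_left).trans hS
        · omega
    _ = 2 * s := by ring

lemma ncard_root_le [Finite V] {s : ℕ} (hS : S.ncard ≤ s) (hZ : Z.ncard ≤ 2 * s) :
    (Z ∪ S ∩ (C ∪ Z)).ncard ≤ 3 * s := by
  have := Set.ncard_union_le Z (S ∩ (C ∪ Z))
  have := Set.ncard_le_ncard (Set.inter_subset_left (s := S) (t := C ∪ Z))
  omega

lemma disjoint_sepInterior_root (hCZ : Disjoint C Z) :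
    Disjoint (sepInterior G S C c) (Z ∪ S ∩ (C ∪ Z)) := by
  rw [Set.disjoint_left]
  rintro y ⟨hyC, hyS, -⟩ (hyZ | ⟨hyS', -⟩)
  exacts [Set.disjoint_left.1 hCZ hyC hyZ, hyS hyS']

lemma adj_mem_root_or_notMem (hN : ∀ ⦃u v⦄, G.Adj u v → u ∈ C → v ∈ C ∪ Z) {u v : V}
    (huv : G.Adj u v) (hu : u ∈ C) :
    u ∈ Z ∪ S ∩ (C ∪ Z) ∧ v ∈ Z ∪ S ∩ (C ∪ Z) ∨ (u ∈ C ∧ u ∉ S) ∨ (v ∈ C ∧ v ∉ S) := by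
  have hv := hN huv hu
  by_cases huS : u ∈ S
  · by_cases hvS : v ∈ S
    · exact Or.inl ⟨Or.inr ⟨huS, Or.inl hu⟩, Or.inr ⟨hvS, hv⟩⟩
    rcases hv with hvC | hvZ
    exacts [Or.inr (Or.inr ⟨hvC, hvS⟩), Or.inl ⟨Or.inr ⟨huS, Or.inl hu⟩, Or.inl hvZ⟩]
  · exact Or.inr (Or.inl ⟨hu, huS⟩)

lemma adj_mem_sepInterior_union_sepBoundary (hN : ∀ ⦃u v⦄, G.Adj u v → u ∈ C → v ∈ C ∪ Z)
    {u v : V} (huv : G.Adj u v) (hu : u ∈ sepInterior G S C c) :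
    v ∈ sepInterior G S C c ∪ sepBoundary G S C Z c := by
  have hv := hN huv hu.1
  by_cases hvS : v ∈ S
  · exact Or.inr (Or.inl ⟨hvS, hv⟩)
  have hmk : (G.restrict Sᶜ).connectedComponentMk v = c :=
    hu.2.2 ▸ (ConnectedComponent.sound (restrict_adj.2 ⟨huv, hu.2.1, hvS⟩).reachable).symm
  rcases hv with hvC | hvZ
  exacts [Or.inl ⟨hvC, hvS, hmk⟩, Or.inr (Or.inr ⟨hvZ, hmk⟩)]

end Separation

lemma Nat.clog_two_add_one_le {m n : ℕ} (hm : 0 < m) (h : 2 * m ≤ n) :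
    Nat.clog 2 m + 1 ≤ Nat.clog 2 n := by
  rw [Nat.clog_of_two_le (n := n) one_lt_two (by omega)]
  exact Nat.add_le_add_right (Nat.clog_mono_right 2 (by omega)) 1

theorem exists_rootedDecomposition [Finite V] {s : ℕ}
    (hsep : ∀ A B : Set V, ∃ S : Set V, S.ncard ≤ s ∧ IsBalancedSeparator G S A ∧
      IsBalancedSeparator G S B)
    (C Z : Set V) (hCZ : Disjoint C Z) (hZ : Z.ncard ≤ 2 * s)
    (hN : ∀ ⦃u v⦄, G.Adj u v → u ∈ C → v ∈ C ∪ Z) :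
    Nonempty (RootedDecomposition G (3 * s) (Nat.clog 2 C.ncard) C Z) := by
  induction hn : C.ncard using Nat.strong_induction_on generalizing C Z with
  | _ n ih =>
  obtain ⟨S, hS, hSC, hSZ⟩ := hsep C Z
  let κ := {c : (G.restrict Sᶜ).ConnectedComponent // (sepInterior G S C c).Nonempty}
  let e : Fin (Nat.card κ) ≃ κ := (Finite.equivFin κ).symm
  have hhalf i := two_mul_ncard_sepInterior_le hSC (e i).2
  have hpos i : 0 < (sepInterior G S C (e i).1).ncard := (Set.ncard_pos).2 (e i).2
  have P i := ih _ (by have := hhalf i; have := hpos i; omega) _ _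
    (disjoint_sepInterior_sepBoundary hCZ) (ncard_sepBoundary_le hS hZ hSZ (e i).2)
    (fun _ _ => adj_mem_sepInterior_union_sepBoundary hN) rfl
  have hmem v (hv : v ∈ C) (hvS : v ∉ S) : ∃ i, v ∈ sepInterior G S C (e i).1 :=
    ⟨e.symm ⟨_, v, hv, hvS, rfl⟩, by rw [e.apply_symm_apply]; exact ⟨hv, hvS, rfl⟩⟩
  refine ⟨RootedDecomposition.join (fun i => (P i).some) (R := Z ∪ S ∩ (C ∪ Z))
    (fun i => hn ▸ Nat.clog_two_add_one_le (hpos i) (hhalf i))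
    (Set.union_subset Set.subset_union_right Set.inter_subset_right) (ncard_root_le hS hZ)
    Set.subset_union_left (fun i => sepInterior_union_sepBoundary_subset) ?_ ?_
    (fun i => disjoint_sepInterior_root hCZ) ?_⟩
  · intro v hv
    by_cases hvS : v ∈ S
    exacts [Or.inl (Or.inr ⟨hvS, Or.inl hv⟩), Or.inr (hmem v hv hvS)]
  · intro u v huv hu
    rcases adj_mem_root_or_notMem hN huv hu with h | ⟨hu, huS⟩ | ⟨hv, hvS⟩
    · exact Or.inl h
    · obtain ⟨i, hi⟩ := hmem u hu huS
      exact Or.inr ⟨i, Or.inl hi⟩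
    · obtain ⟨i, hi⟩ := hmem v hv hvS
      exact Or.inr ⟨i, Or.inr hi⟩
  · intro i j hij y ⟨hyi, hyj⟩
    rcases mem_of_mem_sepInterior_union_sepBoundary hyi with h | hi
    · exact Or.inr h
    rcases mem_of_mem_sepInterior_union_sepBoundary hyj with h | hj
    · exact Or.inr h
    exact absurd (e.injective (Subtype.ext (hi.symm.trans hj))) hij

noncomputable def RootedDecomposition.toTreeDecomposition {b d : ℕ} {Z : Set V}
    (P : RootedDecomposition G b d Set.univ Z) : TreeDecomposition G where
  ι := P.tree.ι
  instFintype := Fintype.ofFinite _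
  tree := P.tree.graph
  tree_isTree := P.tree.isTree
  bag := P.bag
  bag_cover v := P.exists_mem_bag v trivial
  bag_adj _ _ huv := P.exists_adj_mem_bag huv trivial
  bag_path t₁ t₂ _ _ hp ht₃ v hv :=
    P.tree.isAcyclic.mem_of_mem_support (P.reachable v t₁ t₂ hv.1 hv.2) hv.1 hp ht₃

end TreeDecompositions

theorem exists_shallow_tree_decomposition_general {V : Type*} [Fintype V] (G : SimpleGraph V)
    (w : ℕ)
    (h : ∃ D : TreeDecomposition G, ∀ t : D.ι, (D.bag t).ncard ≤ w + 1) :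
    ∃ D : TreeDecomposition G, (∀ t : D.ι, (D.bag t).ncard ≤ 6 * w + 6) ∧
      ∃ root : D.ι, ∀ t : D.ι, D.tree.dist root t ≤ Nat.clog 2 (Fintype.card V) := by
  obtain ⟨D, hD⟩ := h
  obtain ⟨P⟩ := exists_rootedDecomposition (fun A B => D.exists_isBalancedSeparator hD A B)
    Set.univ ∅ (Set.disjoint_empty _) (by simp) fun _ _ _ _ => Or.inl trivial
  refine ⟨P.toTreeDecomposition, fun t => (P.ncard_bag_le t).trans (by omega), P.tree.root,
    fun t => ?_⟩
  calc P.tree.graph.dist P.tree.root t ≤ P.tree.depth t := P.tree.dist_root_le t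
    _ ≤ Nat.clog 2 (Set.univ : Set V).ncard := P.depth_le t
    _ = Nat.clog 2 (Fintype.card V) := by rw [Set.ncard_univ, Nat.card_eq_fintype_card]

/-- If a graph on `n ≥ 1` vertices has a tree decomposition with all bags of size
at most `w + 1`, then it has a rooted tree decomposition with all bags of size at
most `6w + 6` and depth at most `⌈log₂ n⌉` (every node is within distance
`⌈log₂ n⌉` of the root). -/
theorem exists_shallow_tree_decomposition {V : Type*} [Fintype V] (G : SimpleGraph V)
    (w : ℕ) (hn : 1 ≤ Fintype.card V)
    (h : ∃ D : TreeDecomposition G, ∀ t : D.ι, (D.bag t).ncard ≤ w + 1) :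
    ∃ D : TreeDecomposition G, (∀ t : D.ι, (D.bag t).ncard ≤ 6 * w + 6) ∧
      ∃ root : D.ι, ∀ t : D.ι, D.tree.dist root t ≤ Nat.clog 2 (Fintype.card V) :=
  exists_shallow_tree_decomposition_general G w h
end

section
/- Let G be a finite simple graph that admits a tree decomposition in which every bag has at most w+1 vertices. Then for every subset U ⊆ V(G) there exists a set S ⊆ V(G) with |S| ≤ w+1 such that every connected component of the induced subgraph G[V(G) \ S] contains at most |U|/2 vertices of U. -/
namespace SimpleGraph

variable {ι : Type*} {T : SimpleGraph ι} {t s r x y : ι}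

def branch (T : SimpleGraph ι) (t s : ι) : Set ι := {x | ∃ p : T.Walk s x, t ∉ p.support}

lemma mem_branch_self (h : t ≠ s) : s ∈ T.branch t s :=
  ⟨Walk.nil, by simpa using h⟩

lemma self_notMem_branch : t ∉ T.branch t s :=
  fun ⟨p, hp⟩ => hp p.end_mem_support

lemma mem_branch_of_walk (hx : x ∈ T.branch t s) (p : T.Walk x y) (hp : t ∉ p.support) :
    y ∈ T.branch t s := by
  obtain ⟨q, hq⟩ := hx
  refine ⟨q.append p, ?_⟩
  rw [Walk.support_append, List.mem_append]
  exact fun h => h.elim hq (fun h => hp (List.mem_of_mem_tail h))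

lemma mem_branch_of_adj (hx : x ∈ T.branch t s) (hxy : T.Adj x y) (hy : y ≠ t) :
    y ∈ T.branch t s := by
  have hxt : x ≠ t := fun h => self_notMem_branch (h ▸ hx)
  exact mem_branch_of_walk hx (Walk.cons hxy Walk.nil) (by simp [hxt.symm, hy.symm])

/-- The edge `ts` of an acyclic graph is a bridge. -/
lemma disjoint_branch_branch (hT : T.IsAcyclic) (h : T.Adj t s) :
    Disjoint (T.branch t s) (T.branch s t) := by
  refine Set.disjoint_left.mpr fun x ⟨p, hp⟩ ⟨q, hq⟩ => ?_
  have hbridge := isBridge_iff.mp (isAcyclic_iff_forall_adj_isBridge.mp hT h)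
  have havoid : ∀ e ∈ (p.append q.reverse).edges, e ∉ ({s(t, s)} : Set (Sym2 ι)) := by
    rintro e he rfl
    rw [Walk.edges_append, List.mem_append, Walk.edges_reverse, List.mem_reverse] at he
    exact he.elim (fun he => hp (p.fst_mem_support_of_mem_edges he))
      (fun he => hq (q.snd_mem_support_of_mem_edges he))
  exact hbridge ((p.append q.reverse).toDeleteEdges _ havoid).reachable.symm

lemma branch_union_branch (hT : T.Connected) (h : T.Adj t s) :
    T.branch t s ∪ T.branch s t = Set.univ := by
  have step : ∀ {y z}, T.Adj y z → y ∈ T.branch t s ∪ T.branch s t →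
      z ∈ T.branch t s ∪ T.branch s t := by
    intro y z hyz hy
    rcases eq_or_ne z t with rfl | hzt
    · exact .inr (mem_branch_self h.ne')
    rcases eq_or_ne z s with rfl | hzs
    · exact .inl (mem_branch_self h.ne)
    exact hy.elim (fun hy => .inl (mem_branch_of_adj hy hyz hzt))
      (fun hy => .inr (mem_branch_of_adj hy hyz hzs))
  have reach : ∀ {y z} (p : T.Walk y z), y ∈ T.branch t s ∪ T.branch s t →
      z ∈ T.branch t s ∪ T.branch s t := by
    intro y z p
    induction p with
    | nil => exact id
    | cons hyz _ ih => exact fun hy => ih (step hyz hy)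
  exact Set.eq_univ_of_forall fun x =>
    reach (hT.preconnected s x).some (.inl (mem_branch_self h.ne))

lemma branch_compl (hT : T.IsTree) (h : T.Adj t s) : (T.branch t s)ᶜ = T.branch s t :=
  IsCompl.compl_eq ⟨disjoint_branch_branch hT.isAcyclic h,
    codisjoint_iff.mpr (branch_union_branch hT.connected h)⟩

lemma branch_ssubset_branch (hT : T.IsAcyclic) (hts : T.Adj t s) (hsr : T.Adj s r)
    (hrt : r ≠ t) : T.branch s r ⊂ T.branch t s := by
  classical
  refine ⟨fun x ⟨q, hq⟩ => ?_,
    fun hsub => self_notMem_branch (hsub (mem_branch_self hts.ne))⟩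
  have ht : t ∉ q.support := by
    intro ht
    have hts' : t ∈ T.branch r s := ⟨Walk.cons hts.symm Walk.nil, by simp [hsr.ne', hrt]⟩
    refine Set.disjoint_left.mp (disjoint_branch_branch hT hsr) ?_ hts'
    exact ⟨q.takeUntil t ht, fun hs => hq (q.support_takeUntil_subset_support _ hs)⟩
  exact ⟨Walk.cons hsr q, by simp [hts.ne, ht]⟩

lemma exists_adj_mem_branch (hT : T.Connected) (hx : x ≠ t) :
    ∃ s, T.Adj t s ∧ x ∈ T.branch t s := by
  obtain ⟨p, hp, -⟩ := hT.exists_path_of_dist t x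
  cases p with
  | nil => exact absurd rfl hx
  | cons h q => exact ⟨_, h, q, (Walk.cons_isPath_iff _ _).mp hp |>.2⟩

/-- A heavy branch with as few nodes as possible ends at such a node. -/
theorem exists_forall_two_mul_weight_branch_le [Finite ι] [Nonempty ι] (hT : T.IsAcyclic)
    (W : Set ι → ℕ) (N : ℕ)
    (hW : ∀ t s, T.Adj t s → W (T.branch t s) + W (T.branch s t) = N) :
    ∃ t, ∀ s, T.Adj t s → 2 * W (T.branch t s) ≤ N := by
  by_cases hheavy : ∃ e : ι × ι, T.Adj e.1 e.2 ∧ N < 2 * W (T.branch e.1 e.2)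
  · obtain ⟨⟨t, s⟩, ⟨hts, hheavy_ts⟩, hmin⟩ := Set.exists_min_image
      {e : ι × ι | T.Adj e.1 e.2 ∧ N < 2 * W (T.branch e.1 e.2)}
      (fun e => (T.branch e.1 e.2).ncard) (Set.toFinite _) hheavy
    refine ⟨s, fun r hsr => not_lt.mp fun hheavy_sr => ?_⟩
    rcases eq_or_ne r t with rfl | hrt
    · have := hW r s hts
      dsimp only at hheavy_ts
      omega
    · exact (hmin (s, r) ⟨hsr, hheavy_sr⟩).not_gt
        (Set.ncard_lt_ncard (branch_ssubset_branch hT hts hsr hrt))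
  · push Not at hheavy
    exact ⟨Classical.arbitrary ι, fun s h => hheavy (_, s) h⟩

end SimpleGraph

namespace TreeDecomposition

open SimpleGraph

variable {V : Type*} {G : SimpleGraph V} (D : TreeDecomposition G)

noncomputable def home (v : V) : D.ι := (D.bag_cover v).choose

lemma mem_bag_home (v : V) : v ∈ D.bag (D.home v) := (D.bag_cover v).choose_spec

variable {D} {t s t₁ t₂ : D.ι} {u v : V}

lemma home_ne_of_notMem_bag (hv : v ∉ D.bag t) : D.home v ≠ t :=
  fun h => hv (h ▸ D.mem_bag_home v)

lemma mem_branch_of_mem_bag (hv : v ∉ D.bag t) (h₁ : v ∈ D.bag t₁) (h₂ : v ∈ D.bag t₂)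
    (ht₁ : t₁ ∈ D.tree.branch t s) : t₂ ∈ D.tree.branch t s := by
  obtain ⟨p, hp, -⟩ := D.tree_isTree.connected.exists_path_of_dist t₁ t₂
  exact mem_branch_of_walk ht₁ p fun ht => hv (D.bag_path t₁ t₂ t p hp ht ⟨h₁, h₂⟩)

lemma home_mem_branch_of_adj (hu : u ∉ D.bag t) (hv : v ∉ D.bag t) (huv : G.Adj u v)
    (h : D.home u ∈ D.tree.branch t s) : D.home v ∈ D.tree.branch t s := by
  obtain ⟨t', hut', hvt'⟩ := D.bag_adj huv
  exact mem_branch_of_mem_bag hv hvt' (D.mem_bag_home v)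
    (mem_branch_of_mem_bag hu (D.mem_bag_home u) hut' h)

lemma home_mem_branch_of_reachable {x y : ↥(D.bag t)ᶜ}
    (hxy : (G.induce (D.bag t)ᶜ).Reachable x y) (h : D.home x ∈ D.tree.branch t s) :
    D.home y ∈ D.tree.branch t s := by
  obtain ⟨p⟩ := hxy
  induction p with
  | nil => exact h
  | @cons a b _ hab _ ih => exact ih (home_mem_branch_of_adj a.2 b.2 hab h)

lemma exists_adj_forall_home_mem_branch (c : (G.induce (D.bag t)ᶜ).ConnectedComponent) :
    ∃ s, D.tree.Adj t s ∧ ∀ v, (G.induce (D.bag t)ᶜ).connectedComponentMk v = c →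
      D.home v ∈ D.tree.branch t s := by
  obtain ⟨v₀, rfl⟩ := c.exists_rep
  obtain ⟨s, hts, hs⟩ :=
    exists_adj_mem_branch D.tree_isTree.connected (home_ne_of_notMem_bag v₀.2)
  exact ⟨s, hts, fun v hv => home_mem_branch_of_reachable (ConnectedComponent.exact hv.symm) hs⟩

end TreeDecomposition

open SimpleGraph TreeDecomposition in
/-- If `G` has a tree decomposition of width `w` (bags of size at most `w + 1`),
then for every `U ⊆ V(G)` there is a set `S` of at most `w + 1` vertices such that
every connected component of `G[V \ S]` contains at most `|U|/2` vertices of `U`. -/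
theorem exists_small_separator {V : Type*} [Fintype V] (G : SimpleGraph V) (w : ℕ)
    (h : ∃ D : TreeDecomposition G, ∀ t : D.ι, (D.bag t).ncard ≤ w + 1) (U : Set V) :
    ∃ S : Set V, S.ncard ≤ w + 1 ∧
      ∀ c : (G.induce (Sᶜ : Set V)).ConnectedComponent,
        2 * {v : ↥(Sᶜ : Set V) |
          (G.induce (Sᶜ : Set V)).connectedComponentMk v = c ∧ (v : V) ∈ U}.ncard
            ≤ U.ncard := by
  obtain ⟨D, hD⟩ := h
  have := D.instFintype
  have hT := D.tree_isTree
  have := hT.connected.nonempty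
  let W : Set D.ι → ℕ := fun A => (U ∩ D.home ⁻¹' A).ncard
  obtain ⟨t₀, ht₀⟩ := exists_forall_two_mul_weight_branch_le hT.isAcyclic W U.ncard
    fun t s hts => by
      simpa [W, ← branch_compl hT hts, Set.sdiff_eq] using
        Set.ncard_inter_add_ncard_sdiff_eq_ncard U (D.home ⁻¹' D.tree.branch t s)
  refine ⟨D.bag t₀, hD t₀, fun c => ?_⟩
  obtain ⟨s, hs, hc⟩ := exists_adj_forall_home_mem_branch c
  calc 2 * _ ≤ 2 * W (D.tree.branch t₀ s) :=
        Nat.mul_le_mul_left 2 <| Set.ncard_le_ncard_of_injOn Subtype.val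
          (fun v hv => ⟨hv.2, hc v hv.1⟩) Subtype.val_injective.injOn
    _ ≤ U.ncard := ht₀ s hs
end

section
/- Let s ≥ 0 be an integer and write σ_s = ⟨c_1, …, c_{2^{s+1}−1}⟩. Then for every finite sequence ⟨d_1, …, d_x⟩ of positive integers with d_1 + … + d_x ≤ 2^s, there exist indices 1 ≤ i_1 < i_2 < … < i_x ≤ 2^{s+1} − 1 such that d_j ≤ c_{i_j} for all j ∈ {1, …, x}. -/
/-- The universal sequence `σ_s`: `σ_0 = ⟨1⟩` and
`σ_s = σ_{s-1} ⋄ ⟨2^s⟩ ⋄ σ_{s-1}` for `s > 0`. -/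
def sigmaSeq : ℕ → List ℕ
  | 0 => [1]
  | s + 1 => sigmaSeq s ++ [2 ^ (s + 1)] ++ sigmaSeq s

/-!
Call `c` universal for `n` if every list of positive integers with sum at most `n` is dominated
termwise by a sublist of `c`. If `c` is universal for `n`, then `c ++ M :: c` is universal for
every `K ≤ min (2n + 1) M`: cut a list of sum at most `K` just before its prefix sums pass `n`.
The prefix then has sum at most `n`, the element at the cut is at most `K ≤ M`, and what
follows has sum at most `K - (n + 1) ≤ n`. Starting from `[]`, universal for `0`, this gives
`σ_0 = [] ++ 1 :: []` universal for `1` and `σ_{s+1}` universal for `2^(s+1)`.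
-/

def IsUniversal (c : List ℕ) (n : ℕ) : Prop :=
  ∀ d : List ℕ, (∀ x ∈ d, 0 < x) → d.sum ≤ n →
    ∃ e : List ℕ, e.Sublist c ∧ List.Forall₂ (· ≤ ·) d e

theorem List.exists_eq_append_cons_of_lt_sum {d : List ℕ} {n : ℕ} (h : n < d.sum) :
    ∃ l m r, d = l ++ m :: r ∧ l.sum ≤ n ∧ n < l.sum + m := by
  induction d generalizing n with
  | nil => simp at h
  | cons x t ih =>
    rw [List.sum_cons] at h
    by_cases hx : n < x
    · exact ⟨[], x, t, rfl, Nat.zero_le n, by simpa using hx⟩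
    · obtain ⟨l, m, r, rfl, hl, hlm⟩ := ih (n := n - x) (by omega)
      refine ⟨x :: l, m, r, rfl, ?_, ?_⟩ <;> rw [List.sum_cons] <;> omega

theorem isUniversal_nil_zero : IsUniversal [] 0 := by
  intro d hpos hsum
  have hd : d = [] := List.eq_nil_iff_forall_not_mem.2 fun x hx =>
    (hpos x hx).ne' (List.sum_eq_zero_iff.1 (Nat.le_zero.1 hsum) x hx)
  subst hd
  exact ⟨[], List.Sublist.slnil, List.Forall₂.nil⟩

theorem IsUniversal.append_cons_self {c : List ℕ} {n K M : ℕ} (hc : IsUniversal c n)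
    (hKn : K ≤ 2 * n + 1) (hKM : K ≤ M) : IsUniversal (c ++ M :: c) K := by
  intro d hpos hsum
  by_cases hle : d.sum ≤ n
  · obtain ⟨e, he, hde⟩ := hc d hpos hle
    exact ⟨e, he.trans (List.sublist_append_left c _), hde⟩
  obtain ⟨l, m, r, rfl, hl, hlm⟩ := List.exists_eq_append_cons_of_lt_sum (not_le.1 hle)
  have hsum' : l.sum + m + r.sum ≤ K := by simpa [add_assoc] using hsum
  obtain ⟨el, hel, hlel⟩ := hc l (fun x hx => hpos x (by simp [hx])) hl
  obtain ⟨er, her, hrer⟩ := hc r (fun x hx => hpos x (by simp [hx])) (by omega)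
  exact ⟨el ++ M :: er, hel.append (her.cons_cons M),
    List.rel_append hlel (List.Forall₂.cons (by omega) hrer)⟩

theorem isUniversal_sigmaSeq (s : ℕ) : IsUniversal (sigmaSeq s) (2 ^ s) := by
  induction s with
  | zero => exact isUniversal_nil_zero.append_cons_self le_rfl le_rfl
  | succ s ih =>
    simpa [sigmaSeq] using ih.append_cons_self (K := 2 ^ (s + 1)) (by omega) le_rfl

/-- For every sequence `⟨d_1, …, d_x⟩` of positive integers with
`d_1 + ⋯ + d_x ≤ 2^s`, there is a subsequence `⟨c_{i_1}, …, c_{i_x}⟩` of `σ_s`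
(indices strictly increasing) with `d_j ≤ c_{i_j}` for all `j`. -/
theorem sigmaSeq_dominating_subsequence (s : ℕ) (d : List ℕ)
    (hpos : ∀ x ∈ d, 0 < x) (hsum : d.sum ≤ 2 ^ s) :
    ∃ c : List ℕ, c.Sublist (sigmaSeq s) ∧ List.Forall₂ (· ≤ ·) d c :=
  isUniversal_sigmaSeq s d hpos hsum
end

section
/- Define L : ℕ × ℕ → ℕ by L(0, k) = 2^k and L(h+1, k) = Σ_{i=0}^{k} 2^{k−i+1} · L(h, i). Then for all natural numbers h and k, L(h, k) = 2^{h+k} · C(h+k, k), where C denotes the binomial coefficient. -/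
/-- The length recurrence for leaf sequences:
`L(0, k) = 2^k` and `L(h+1, k) = Σ_{i=0}^{k} 2^{k-i+1} · L(h, i)`. -/
def L : ℕ → ℕ → ℕ
  | 0, k => 2 ^ k
  | h + 1, k => ∑ i ∈ Finset.range (k + 1), 2 ^ (k - i + 1) * L h i

open Finset

/- Every summand of `L (h+1) k` carries the same power `2^(h+k+1)`, so the recursion step
is the hockey-stick identity `∑_{i ≤ k} C(i+h, h) = C(k+h+1, h+1)`. -/
theorem L_eq_two_pow_mul_choose (h k : ℕ) : L h k = 2 ^ (h + k) * (k + h).choose h := by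
  induction h generalizing k with
  | zero => simp [L]
  | succ h ih =>
    have summand (i : ℕ) (hi : i ∈ range (k + 1)) :
        2 ^ (k - i + 1) * L h i = 2 ^ (h + 1 + k) * (i + h).choose h := by
      have hik := mem_range_succ_iff.mp hi
      rw [ih, ← mul_assoc, ← pow_add]
      congr 2
      omega
    rw [L, sum_congr rfl summand, ← mul_sum, Nat.sum_range_add_choose, ← add_assoc k h 1]

/-- `L(h, k) = 2^{h+k} · C(h+k, k)`. -/
theorem L_closed_form (h k : ℕ) : L h k = 2 ^ (h + k) * (h + k).choose k := by
  rw [L_eq_two_pow_mul_choose, add_comm k h, Nat.choose_symm_add]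
end

section
/- Let G be a finite graph with a rooted full binary tree decomposition (T,B), and let t be an internal node of T with children t1 and t2. Let p = (v_0, v_1, …, v_l) be a path in G all of whose edges belong to E↕(t). Then there exist indices 0 = j_0 ≤ j_1 ≤ … ≤ j_k = l such that: for each m ∈ {1,…,k}, all edges of the subpath (v_{j_{m−1}}, …, v_{j_m}) belong to E↕(t1) or all of them belong to E↕(t2); and each breakpoint vertex v_{j_m} (0 ≤ m ≤ k) that also satisfies v_{j_m} ∉ Vanc(t) does not occur, i.e., every v_{j_m} belongs to Vanc(t), provided v_0 and v_l belong to Vanc(t). -/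
/-- A rooted full binary tree with a bag of vertices at every node:
every node has either zero or exactly two children. -/
inductive BTree (V : Type) : Type where
  | leaf : Set V → BTree V
  | node : Set V → BTree V → BTree V → BTree V

namespace BTree

variable {V : Type}

/-- The bag at the root of a binary tree. -/
def rootBag : BTree V → Set V
  | leaf b => b
  | node b _ _ => b

/-- The subtree rooted at position `p` (a list of left/right moves from the root),
if `p` is a valid position. -/
def subtreeAt : BTree V → List Bool → Option (BTree V)
  | t, [] => some t
  | leaf _, _ :: _ => none
  | node _ l _, false :: p => subtreeAt l p
  | node _ _ r, true :: p => subtreeAt r p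

/-- `p` is a valid position (node) of the tree `T`. -/
def IsPos (T : BTree V) (p : List Bool) : Prop := (subtreeAt T p).isSome

/-- The bag at position `p` of the tree `T` (empty if `p` is invalid). -/
def bagAt (T : BTree V) (p : List Bool) : Set V :=
  ((subtreeAt T p).map rootBag).getD ∅

/-- `p3` lies on the (unique) path between the nodes `p1` and `p2` of a rooted
tree whose nodes are positions: `p3` is an ancestor of `p1` or of `p2`, and
every common ancestor of `p1` and `p2` is an ancestor of `p3`. -/
def OnPath (p1 p2 p3 : List Bool) : Prop :=
  (p3 <+: p1 ∨ p3 <+: p2) ∧ ∀ q : List Bool, q <+: p1 → q <+: p2 → q <+: p3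

/-- `Vanc T t` is the union of the bags of all ancestors of `t` (inclusive). -/
def Vanc (T : BTree V) (t : List Bool) : Set V :=
  {v | ∃ p : List Bool, p <+: t ∧ v ∈ bagAt T p}

end BTree

open BTree

/-- `T` is a (rooted, full binary) tree decomposition of the simple graph `G`. -/
structure IsBTreeDecomp {V : Type} (G : SimpleGraph V) (T : BTree V) : Prop where
  cover : ∀ v : V, ∃ p : List Bool, IsPos T p ∧ v ∈ bagAt T p
  edge : ∀ ⦃a b : V⦄, G.Adj a b → ∃ p : List Bool, IsPos T p ∧ a ∈ bagAt T p ∧ b ∈ bagAt T p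
  path : ∀ p1 p2 p3 : List Bool, IsPos T p1 → IsPos T p2 → OnPath p1 p2 p3 →
    bagAt T p1 ∩ bagAt T p2 ⊆ bagAt T p3

/-- `EUpDown G T t a b`: `{a, b}` is an edge of `G` whose endpoints both lie in the
bag of some node that is an ancestor or a descendant of `t`. -/
def EUpDown {V : Type} (G : SimpleGraph V) (T : BTree V) (t : List Bool) (a b : V) : Prop :=
  G.Adj a b ∧ ∃ p : List Bool, IsPos T p ∧ (p <+: t ∨ t <+: p) ∧
    a ∈ bagAt T p ∧ b ∈ bagAt T p

/-! A path in `E↕(t)` uses, edge by edge, either `E↕(t1)` or `E↕(t2)`; cut it wherever that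
choice changes. At such a cut the vertex lies in a bag related to `t1` and in a bag related
to `t2`. If either bag belongs to an ancestor of `t` we are done; otherwise the two nodes lie
below different children of `t`, so `t` is on the tree path between them and the
decomposition puts the vertex into the bag of `t`. -/

namespace List

variable {α : Type*} {t p q r : List α} {x y : α}

theorem prefix_or_concat_prefix_of_related (h : p <+: t ++ [x] ∨ t ++ [x] <+: p) :
    p <+: t ∨ t ++ [x] <+: p := by
  rcases h with h | h
  · rcases prefix_concat_iff.1 h with rfl | h
    · exact .inr (prefix_refl _)
    · exact .inl h
  · exact .inr h

theorem eq_of_concat_prefix_of_concat_prefix (hx : t ++ [x] <+: q) (hy : t ++ [y] <+: q) :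
    x = y := by
  simpa using prefix_of_prefix_length_le hx hy (by simp)

theorem prefix_of_prefix_of_concat_prefix_of_ne (hxp : t ++ [x] <+: p) (hyq : t ++ [y] <+: q)
    (hxy : x ≠ y) (hrp : r <+: p) (hrq : r <+: q) : r <+: t := by
  rcases prefix_or_prefix_of_prefix hrp hxp with h | h
  · rcases prefix_concat_iff.1 h with rfl | h
    · exact absurd (eq_of_concat_prefix_of_concat_prefix hrq hyq) hxy
    · exact h
  · exact absurd (eq_of_concat_prefix_of_concat_prefix (h.trans hrq) hyq) hxy

end List

namespace EUpDown

variable {V : Type} {G : SimpleGraph V} {T : BTree V} {t : List Bool} {a b : V}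

theorem left_or_right (h : EUpDown G T t a b) :
    EUpDown G T (t ++ [false]) a b ∨ EUpDown G T (t ++ [true]) a b := by
  obtain ⟨hadj, p, hp, hrel, ha, hb⟩ := h
  rcases hrel with hpt | ⟨s, rfl⟩
  · exact .inl ⟨hadj, p, hp, .inl (hpt.trans (t.prefix_append _)), ha, hb⟩
  rcases s with _ | ⟨c, s⟩
  · exact .inl ⟨hadj, _, hp, .inl (by simp), ha, hb⟩
  · have hc : t ++ [c] <+: t ++ c :: s := by simp
    cases c
    · exact .inl ⟨hadj, _, hp, .inr hc, ha, hb⟩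
    · exact .inr ⟨hadj, _, hp, .inr hc, ha, hb⟩

theorem exists_bag_of_child {x : Bool} (h : EUpDown G T (t ++ [x]) a b) :
    ∃ p, IsPos T p ∧ (p <+: t ∨ t ++ [x] <+: p) ∧ a ∈ bagAt T p ∧ b ∈ bagAt T p := by
  obtain ⟨-, p, hp, hrel, ha, hb⟩ := h
  exact ⟨p, hp, List.prefix_or_concat_prefix_of_related hrel, ha, hb⟩

end EUpDown

theorem mem_Vanc_of_eUpDown_distinct_children {V : Type} {G : SimpleGraph V} {T : BTree V}
    (hdec : IsBTreeDecomp G T) {t : List Bool} {x y : Bool} (hxy : x ≠ y) {u w z : V}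
    (h₁ : EUpDown G T (t ++ [x]) u w) (h₂ : EUpDown G T (t ++ [y]) w z) :
    w ∈ Vanc T t := by
  obtain ⟨p, hp, hpt | hxp, -, hwp⟩ := h₁.exists_bag_of_child
  · exact ⟨p, hpt, hwp⟩
  obtain ⟨q, hq, hqt | hyq, hwq, -⟩ := h₂.exists_bag_of_child
  · exact ⟨q, hqt, hwq⟩
  have ht : OnPath p q t := ⟨.inl ((t.prefix_append [x]).trans hxp),
    fun _ => List.prefix_of_prefix_of_concat_prefix_of_ne hxp hyq hxy⟩
  exact ⟨t, List.prefix_refl t, hdec.path p q t hp hq ht ⟨hwp, hwq⟩⟩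

structure IsMonoSplitting {α : Type*} (c : ℕ → α) (P : ℕ → Prop) (n k : ℕ) (j : ℕ → ℕ) :
    Prop where
  start : j 0 = 0
  finish : j k = n
  monotone : ∀ m < k, j m ≤ j (m + 1)
  const : ∀ m < k, ∀ i, j m ≤ i → i < j (m + 1) → c i = c (j m)
  breakpoint : ∀ m ≤ k, P (j m)

namespace IsMonoSplitting

variable {α : Type*} {c : ℕ → α} {P : ℕ → Prop} {n k : ℕ} {j : ℕ → ℕ}

theorem le_finish (hs : IsMonoSplitting c P n k j) {m : ℕ} (hm : m ≤ k) : j m ≤ n := by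
  induction hm using Nat.decreasingInduction with
  | self => exact hs.finish.le
  | of_succ m hm ih => exact (hs.monotone m hm).trans ih

theorem snoc (hs : IsMonoSplitting c P n k j) {n' : ℕ} (hn : n ≤ n')
    (hrun : ∀ i, n ≤ i → i < n' → c i = c n) (hn' : P n') :
    IsMonoSplitting c P n' (k + 1) (fun m => if m ≤ k then j m else n') where
  start := by simp [hs.start]
  finish := by simp
  monotone m hm := by
    rcases Nat.lt_or_ge m k with h | h
    · simpa [h.le, Nat.succ_le_of_lt h] using hs.monotone m h
    · obtain rfl : m = k := by omega
      simpa [hs.finish] using hn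
  const m hm i := by
    rcases Nat.lt_or_ge m k with h | h
    · simpa [h.le, Nat.succ_le_of_lt h] using hs.const m h i
    · obtain rfl : m = k := by omega
      simpa [hs.finish] using hrun i
  breakpoint m hm := by
    rcases Nat.lt_or_ge k m with h | h
    · simpa [Nat.not_le_of_lt h] using hn'
    · simpa [h] using hs.breakpoint m h

end IsMonoSplitting

theorem exists_run_start {α : Type*} (c : ℕ → α) (m : ℕ) :
    ∃ i ≤ m, (∀ i₀, i = i₀ + 1 → c i₀ ≠ c i) ∧ ∀ i', i ≤ i' → i' ≤ m → c i' = c m := by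
  induction m with
  | zero => exact ⟨0, le_rfl, by simp, fun i' _ h => by rw [Nat.le_zero.1 h]⟩
  | succ m ih =>
    by_cases h : c m = c (m + 1)
    · obtain ⟨i, him, hstart, hconst⟩ := ih
      refine ⟨i, by omega, hstart, fun i' h₁ h₂ => ?_⟩
      rcases Nat.lt_or_ge i' (m + 1) with h' | h'
      · rw [hconst i' h₁ (by omega), h]
      · rw [le_antisymm h₂ h']
    · refine ⟨m + 1, le_rfl, fun i₀ h' => ?_, fun i' h₁ h₂ => by rw [le_antisymm h₂ h₁]⟩
      obtain rfl : i₀ = m := by omega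
      exact h

theorem exists_isMonoSplitting {α : Type*} (c : ℕ → α) (P : ℕ → Prop) (h₀ : P 0) {n : ℕ}
    (hchange : ∀ i, i + 1 < n → c i ≠ c (i + 1) → P (i + 1)) (hn : P n) :
    ∃ k j, IsMonoSplitting c P n k j := by
  induction n using Nat.strong_induction_on with
  | _ n ih =>
    rcases n with _ | m
    · exact ⟨0, fun _ => 0, ⟨rfl, rfl, by simp, by simp, fun _ _ => h₀⟩⟩
    obtain ⟨i, him, hstart, hrun⟩ := exists_run_start c m
    have hi : P i := by
      rcases i with _ | i₀
      · exact h₀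
      · exact hchange i₀ (by omega) (hstart i₀ rfl)
    obtain ⟨k, j, hs⟩ := ih i (by omega) (fun i' h' => hchange i' (by omega)) hi
    exact ⟨k + 1, _, hs.snoc (by omega)
      (fun i' h₁ h₂ => (hrun i' h₁ (by omega)).trans (hrun i le_rfl him).symm) hn⟩

theorem path_splits_at_ancestor_vertices_general {V : Type} (G : SimpleGraph V)
    (T : BTree V) (hdec : IsBTreeDecomp G T) (t : List Bool)
    (l : ℕ) (v : ℕ → V)
    (hpath : ∀ i < l, EUpDown G T t (v i) (v (i + 1)))
    (h0 : v 0 ∈ Vanc T t) (hl : v l ∈ Vanc T t) :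
    ∃ (k : ℕ) (j : ℕ → ℕ), j 0 = 0 ∧ j k = l ∧ (∀ m < k, j m ≤ j (m + 1)) ∧
      (∀ m < k,
        (∀ i : ℕ, j m ≤ i → i < j (m + 1) → EUpDown G T (t ++ [false]) (v i) (v (i + 1))) ∨
        (∀ i : ℕ, j m ≤ i → i < j (m + 1) → EUpDown G T (t ++ [true]) (v i) (v (i + 1)))) ∧
      (∀ m ≤ k, v (j m) ∈ Vanc T t) := by
  classical
  let c : ℕ → Bool := fun i => decide (EUpDown G T (t ++ [true]) (v i) (v (i + 1)))
  have hc : ∀ i < l, EUpDown G T (t ++ [c i]) (v i) (v (i + 1)) := by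
    intro i hi
    by_cases h : EUpDown G T (t ++ [true]) (v i) (v (i + 1))
    · simp [c, h]
    · simpa [c, h] using (hpath i hi).left_or_right.resolve_right h
  obtain ⟨k, j, hs⟩ := exists_isMonoSplitting c (fun i => v i ∈ Vanc T t) h0
    (fun i hi hne =>
      mem_Vanc_of_eUpDown_distinct_children hdec hne (hc i (by omega)) (hc (i + 1) hi)) hl
  refine ⟨k, j, hs.start, hs.finish, hs.monotone, fun m hm => ?_, hs.breakpoint⟩
  have hrun : ∀ i, j m ≤ i → i < j (m + 1) → EUpDown G T (t ++ [c (j m)]) (v i) (v (i + 1)) :=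
    fun i h₁ h₂ => hs.const m hm i h₁ h₂ ▸ hc i (by have := hs.le_finish (m := m + 1) hm; omega)
  cases hcm : c (j m) <;> rw [hcm] at hrun
  exacts [.inl hrun, .inr hrun]

/-- A path `v_0, …, v_l` in `G` all of whose edges lie in `E↕(t)`, with both
endpoints in `Vanc(t)`, can be split into consecutive subpaths
`v_{j_{m-1}}, …, v_{j_m}` each of which lies entirely in `E↕(t1)` or entirely in
`E↕(t2)` (where `t1, t2` are the children of the internal node `t`), and all the
breakpoint vertices `v_{j_m}` belong to `Vanc(t)`. -/
theorem path_splits_at_ancestor_vertices {V : Type} [Fintype V] (G : SimpleGraph V)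
    (T : BTree V) (hdec : IsBTreeDecomp G T) (t : List Bool) (b : Set V)
    (lt rt : BTree V) (hint : subtreeAt T t = some (BTree.node b lt rt))
    (l : ℕ) (v : ℕ → V)
    (hpath : ∀ i < l, EUpDown G T t (v i) (v (i + 1)))
    (hinj : ∀ i ≤ l, ∀ j ≤ l, v i = v j → i = j)
    (h0 : v 0 ∈ Vanc T t) (hl : v l ∈ Vanc T t) :
    ∃ (k : ℕ) (j : ℕ → ℕ), j 0 = 0 ∧ j k = l ∧ (∀ m < k, j m ≤ j (m + 1)) ∧
      (∀ m < k,
        (∀ i : ℕ, j m ≤ i → i < j (m + 1) → EUpDown G T (t ++ [false]) (v i) (v (i + 1))) ∨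
        (∀ i : ℕ, j m ≤ i → i < j (m + 1) → EUpDown G T (t ++ [true]) (v i) (v (i + 1)))) ∧
      (∀ m ≤ k, v (j m) ∈ Vanc T t) :=
  path_splits_at_ancestor_vertices_general G T hdec t l v hpath h0 hl
end

section
/- Let G be a finite directed graph with a rooted full binary tree decomposition (T,B) (directions of edges are ignored for the decomposition conditions). Let t be a node of T, let d be a positive power of 2, and let M_0 ⊆ V(G). Suppose x ∈ M_0, x and y both belong to Vanc(t), and there is a directed path from x to y in G using at most d edges, every edge of which belongs to E↕(t). Let f_1, …, f_m be the leaf sequence lseq(t, d) and define the marking sets M_i = { z ∈ Vanc(f_i) : ∃ w ∈ M_{i−1} with w = z or (w,z) a directed edge of G } for i = 1, …, m. Then y ∈ M_m. -/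
open BTree

/-- `T` is a (rooted, full binary) tree decomposition of the directed graph `G`
(directions of edges are ignored for the decomposition conditions). -/
structure IsBTreeDecompDir {V : Type} (G : V → V → Prop) (T : BTree V) : Prop where
  cover : ∀ v : V, ∃ p : List Bool, IsPos T p ∧ v ∈ bagAt T p
  edge : ∀ ⦃a b : V⦄, G a b → ∃ p : List Bool, IsPos T p ∧ a ∈ bagAt T p ∧ b ∈ bagAt T p
  path : ∀ p1 p2 p3 : List Bool, IsPos T p1 → IsPos T p2 → OnPath p1 p2 p3 →
    bagAt T p1 ∩ bagAt T p2 ⊆ bagAt T p3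

/-- `EUpDownDir G T t a b`: `(a, b)` is a directed edge of `G` whose endpoints both
lie in the bag of some node that is an ancestor or a descendant of `t`. -/
def EUpDownDir {V : Type} (G : V → V → Prop) (T : BTree V) (t : List Bool) (a b : V) : Prop :=
  G a b ∧ ∃ p : List Bool, IsPos T p ∧ (p <+: t ∨ t <+: p) ∧
    a ∈ bagAt T p ∧ b ∈ bagAt T p

/-- The leaf sequence `lseq(t, d)` (as a list of positions in the whole tree, the
subtree rooted at position `pos` being `t`): if `t` is a leaf then it is `t`
repeated `d` times, and otherwise it is
`lseq(left t, c_1) ⋄ lseq(right t, c_1) ⋄ ⋯ ⋄ lseq(left t, c_{2d-1}) ⋄ lseq(right t, c_{2d-1})`,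
where `c_i` is the `i`-th entry of `σ_{log₂ d}`. -/
def lseq {V : Type} : BTree V → ℕ → List Bool → List (List Bool)
  | BTree.leaf _, d, pos => List.replicate d pos
  | BTree.node _ l r, d, pos =>
      (sigmaSeq (Nat.log2 d)).flatMap fun c =>
        lseq l c (pos ++ [false]) ++ lseq r c (pos ++ [true])

/-- One marking step: given the current marked set `M` and a leaf `f`, the new
marked set is `{ z ∈ Vanc(f) : ∃ w ∈ M, w = z or (w, z) is an edge }`. -/
def markStep {V : Type} (G : V → V → Prop) (T : BTree V) (M : Set V) (f : List Bool) : Set V :=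
  {z | z ∈ Vanc T f ∧ ∃ w ∈ M, w = z ∨ G w z}

/-!
Induction on the subtree at `t`. At a leaf, every edge of the walk lies in a bag of an
ancestor of `t`, so each copy of `t` in the leaf sequence advances the mark by one edge.
At an inner node, cut the walk at its vertices in `Vanc(t)`. Between two consecutive cuts the
walk stays below one child of `t`, since a vertex in bags on both sides of `t` lies in the bag
of `t`; by induction such a piece is handled by any block `lseq(left, c) ⋄ lseq(right, c)` with
`c` at least its length, while marks on `Vanc(t)` survive every block. The universality of
`σ_k` provides such blocks in order for pieces of total length at most `2 ^ k`.
-/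

theorem Nat.exists_gap_around {P : ℕ → Prop} {i m j : ℕ} (him : i ≤ m) (hmj : m ≤ j)
    (hi : P i) (hj : P j) :
    ∃ p q, i ≤ p ∧ p ≤ m ∧ m ≤ q ∧ q ≤ j ∧ P p ∧ P q ∧ ∀ r, p < r → r < q → ¬ P r := by
  classical
  have hq : ∃ q : ℕ, m ≤ q ∧ P q := ⟨j, hmj, hj⟩
  set p := Nat.findGreatest (fun r => i ≤ r ∧ P r) m
  have hp : i ≤ p ∧ P p := Nat.findGreatest_spec (P := fun r => i ≤ r ∧ P r) him ⟨le_rfl, hi⟩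
  refine ⟨p, Nat.find hq, hp.1, Nat.findGreatest_le m, (Nat.find_spec hq).1,
    Nat.find_min' hq ⟨hmj, hj⟩, hp.2, (Nat.find_spec hq).2, fun r hpr hrq hr => ?_⟩
  rcases le_or_gt r m with hrm | hmr
  · exact Nat.findGreatest_is_greatest hpr hrm ⟨hp.1.trans hpr.le, hr⟩
  · exact Nat.find_min hq hrq ⟨hmr.le, hr⟩

/-- Universality of `σ_k`: the gaps between consecutive points of `P` in a stretch of length
at most `2 ^ k` can be matched, in order, with entries of `σ_k` dominating them. Here
`R fs p q` reads "processing `fs` leads from `p` to `q`". -/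
theorem sigmaSeq_universal {α : Type*} {P : ℕ → Prop} {R : List α → ℕ → ℕ → Prop}
    (block : ℕ → List α)
    (trans : ∀ {fs gs p q r}, R fs p q → R gs q r → R (fs ++ gs) p r)
    (gap : ∀ {e p q}, p ≤ q → q ≤ p + 2 ^ e → P p → P q →
      (∀ r, p < r → r < q → ¬ P r) → R (block (2 ^ e)) p q) :
    ∀ (k : ℕ) {i j : ℕ}, i ≤ j → j ≤ i + 2 ^ k → P i → P j →
      R ((sigmaSeq k).flatMap block) i j := by
  intro k
  induction k with
  | zero =>
    intro i j hij hji hi hj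
    simpa [sigmaSeq] using gap (e := 0) hij hji hi hj (fun r hir hrj => by omega)
  | succ k ih =>
    intro i j hij hji hi hj
    obtain ⟨p, q, hip, hpm, hmq, hqj, hp, hq, hgap⟩ :=
      Nat.exists_gap_around (m := min (i + 2 ^ k) j) (le_min (by omega) hij) (min_le_right _ _)
        hi hj
    have h2 : 2 ^ (k + 1) = 2 ^ k + 2 ^ k := by ring
    rw [sigmaSeq, List.flatMap_append, List.flatMap_append]
    refine trans (trans (ih hip (by omega) hi hp) ?_) (ih hqj (by omega) hq hj)
    simpa using gap (e := k + 1) (hpm.trans hmq) (by omega) hp hq hgap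

theorem List.prefix_or_concat_prefix_of_comparable {α : Type*} {t p : List α} {a : α}
    (h : p <+: t ++ [a] ∨ t ++ [a] <+: p) : p <+: t ∨ t ++ [a] <+: p := by
  rcases h with h | h
  · rcases List.prefix_concat_iff.mp h with rfl | h
    · exact Or.inr List.prefix_rfl
    · exact Or.inl h
  · exact Or.inr h

namespace BTree

variable {V : Type}

theorem subtreeAt_append (T : BTree V) (p q : List Bool) :
    subtreeAt T (p ++ q) = (subtreeAt T p).bind (fun s => subtreeAt s q) := by
  induction p generalizing T with
  | nil => simp [subtreeAt]
  | cons b p ih =>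
    cases T with
    | leaf _ => simp [subtreeAt]
    | node _ l r => cases b <;> simp [subtreeAt, ih]

theorem eq_of_prefix_of_subtreeAt_leaf {T : BTree V} {t p : List Bool} {b : Set V}
    (ht : subtreeAt T t = some (leaf b)) (hp : IsPos T p) (htp : t <+: p) : p = t := by
  obtain ⟨q, rfl⟩ := htp
  cases q with
  | nil => simp
  | cons _ _ => simp [IsPos, subtreeAt_append, ht, subtreeAt] at hp

theorem Vanc_mono {T : BTree V} {t f : List Bool} (h : t <+: f) : Vanc T t ⊆ Vanc T f :=
  fun _ ⟨p, hp, hv⟩ => ⟨p, hp.trans h, hv⟩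

theorem prefix_of_mem_lseq {s : BTree V} {c : ℕ} {u f : List Bool} (hf : f ∈ lseq s c u) :
    u <+: f := by
  induction s generalizing c u with
  | leaf b =>
    rw [lseq] at hf
    rw [List.eq_of_mem_replicate hf]
  | node b lc rc ihl ihr =>
    rw [lseq] at hf
    obtain ⟨c', _, hf⟩ := List.mem_flatMap.mp hf
    rcases List.mem_append.mp hf with h | h
    · exact (List.prefix_append u [false]).trans (ihl h)
    · exact (List.prefix_append u [true]).trans (ihr h)

theorem not_prefix_of_ne {t p : List Bool} {s s' : Bool} (hss' : s ≠ s')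
    (hs : t ++ [s] <+: p) (hs' : t ++ [s'] <+: p) : False := by
  rcases List.prefix_or_prefix_of_prefix hs hs' with h | h <;> simp_all

end BTree

open BTree

section Decomposition

variable {V : Type} {G : V → V → Prop} {T : BTree V}

/-- The path between two nodes below different children of `t` passes through `t`. -/
theorem IsBTreeDecompDir.mem_Vanc_of_sides (hdec : IsBTreeDecompDir G T) {t p₁ p₂ : List Bool}
    {s₁ s₂ : Bool} {a : V} (hs : s₁ ≠ s₂)
    (h₁ : p₁ <+: t ++ [s₁] ∨ t ++ [s₁] <+: p₁) (h₂ : p₂ <+: t ++ [s₂] ∨ t ++ [s₂] <+: p₂)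
    (hp₁ : IsPos T p₁) (hp₂ : IsPos T p₂) (ha₁ : a ∈ bagAt T p₁) (ha₂ : a ∈ bagAt T p₂) :
    a ∈ Vanc T t := by
  obtain h₁ | h₁ := List.prefix_or_concat_prefix_of_comparable h₁
  · exact ⟨p₁, h₁, ha₁⟩
  obtain h₂ | h₂ := List.prefix_or_concat_prefix_of_comparable h₂
  · exact ⟨p₂, h₂, ha₂⟩
  refine ⟨t, List.prefix_rfl, hdec.path p₁ p₂ t hp₁ hp₂ ⟨?_, fun q hq₁ hq₂ => ?_⟩ ⟨ha₁, ha₂⟩⟩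
  · exact Or.inl ((List.prefix_append t _).trans h₁)
  rcases List.prefix_or_prefix_of_prefix hq₁ h₁ with hq | hq
  · rcases List.prefix_concat_iff.mp hq with rfl | hq
    · exact (not_prefix_of_ne hs hq₂ h₂).elim
    · exact hq
  · exact (not_prefix_of_ne hs (hq.trans hq₂) h₂).elim

theorem EUpDownDir.exists_child {t : List Bool} {a b : V} (h : EUpDownDir G T t a b) :
    ∃ s, EUpDownDir G T (t ++ [s]) a b := by
  obtain ⟨hG, p, hp, hor | ⟨q, rfl⟩, ha, hb⟩ := h
  · exact ⟨false, hG, p, hp, Or.inl (hor.trans (List.prefix_append t _)), ha, hb⟩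
  cases q with
  | nil => exact ⟨false, hG, _, hp, Or.inl (by simp), ha, hb⟩
  | cons s q => exact ⟨s, hG, _, hp, Or.inr ⟨q, by simp⟩, ha, hb⟩

theorem EUpDownDir.mem_Vanc_of_leaf {t : List Bool} {b : Set V} {a c : V}
    (ht : subtreeAt T t = some (leaf b)) (h : EUpDownDir G T t a c) : a ∈ Vanc T t := by
  obtain ⟨_, p, hp, hor, ha, _⟩ := h
  refine ⟨p, hor.elim id fun htp => ?_, ha⟩
  rw [eq_of_prefix_of_subtreeAt_leaf ht hp htp]

theorem IsBTreeDecompDir.exists_side_of_avoid (hdec : IsBTreeDecompDir G T) {t : List Bool}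
    {v : ℕ → V} {p q : ℕ} (hedge : ∀ r ∈ Set.Ico p q, EUpDownDir G T t (v r) (v (r + 1)))
    (havoid : ∀ r, p < r → r < q → v r ∉ Vanc T t) :
    ∃ s, ∀ r ∈ Set.Ico p q, EUpDownDir G T (t ++ [s]) (v r) (v (r + 1)) := by
  rcases le_or_gt q p with hqp | hpq
  · exact ⟨false, fun r hr => absurd hr.2 (by have := hr.1; omega)⟩
  obtain ⟨s, hs⟩ := (hedge p ⟨le_rfl, hpq⟩).exists_child
  refine ⟨s, fun r hr => ?_⟩
  induction r, hr.1 using Nat.le_induction with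
  | base => exact hs
  | succ r hpr ih =>
    have hprev := ih ⟨hpr, by have := hr.2; omega⟩
    obtain ⟨s', hs'⟩ := (hedge (r + 1) hr).exists_child
    by_cases hss' : s = s'
    · exact hss' ▸ hs'
    obtain ⟨-, p₁, hp₁, h₁, -, hv₁⟩ := hprev
    obtain ⟨-, p₂, hp₂, h₂, hv₂, -⟩ := hs'
    exact absurd (hdec.mem_Vanc_of_sides hss' h₁ h₂ hp₁ hp₂ hv₁ hv₂)
      (havoid (r + 1) (by omega) hr.2)

end Decomposition

section Marking

variable {V : Type} {G : V → V → Prop} {T : BTree V}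

def Propagates (G : V → V → Prop) (T : BTree V) (fs : List (List Bool)) (a b : V) : Prop :=
  ∀ M : Set V, a ∈ M → b ∈ fs.foldl (markStep G T) M

theorem Propagates.append {fs gs : List (List Bool)} {a b c : V} (h₁ : Propagates G T fs a b)
    (h₂ : Propagates G T gs b c) : Propagates G T (fs ++ gs) a c := fun M ha => by
  rw [List.foldl_append]; exact h₂ _ (h₁ M ha)

theorem propagates_singleton {f : List Bool} {a b : V} (hb : b ∈ Vanc T f) (hab : a = b ∨ G a b) :
    Propagates G T [f] a b :=
  fun _ ha => ⟨hb, a, ha, hab⟩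

theorem propagates_of_walk {v : ℕ → V} :
    ∀ {fs : List (List Bool)} {i j : ℕ}, i ≤ j → j ≤ i + fs.length →
      (∀ r ∈ Set.Icc i j, ∀ f ∈ fs, v r ∈ Vanc T f) → (∀ r ∈ Set.Ico i j, G (v r) (v (r + 1))) →
      Propagates G T fs (v i) (v j)
  | [], i, j, hij, hji, _, _ => fun M h => by
    obtain rfl : j = i := by simp at hji; omega
    exact h
  | f :: fs, i, j, hij, hji, hV, hG => by
    have hVf r (hr : r ∈ Set.Icc i j) : v r ∈ Vanc T f := hV r hr f List.mem_cons_self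
    have hVfs r (hr : r ∈ Set.Icc i j) : ∀ g ∈ fs, v r ∈ Vanc T g :=
      fun g hg => hV r hr g (List.mem_cons_of_mem f hg)
    rcases hij.eq_or_lt with rfl | hij
    · exact (propagates_singleton (hVf i ⟨le_rfl, le_rfl⟩) (Or.inl rfl)).append
        (propagates_of_walk le_rfl (by omega) hVfs hG)
    · simp only [List.length_cons] at hji
      have hstep := propagates_singleton (hVf (i + 1) ⟨by omega, hij⟩) (Or.inr (hG i ⟨le_rfl, hij⟩))
      exact hstep.append (propagates_of_walk hij (by omega)
        (fun r hr => hVfs r ⟨by grind, hr.2⟩) fun r hr => hG r ⟨by grind, hr.2⟩)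

theorem propagates_lseq_self {s : BTree V} {c : ℕ} {u : List Bool} {a : V} (ha : a ∈ Vanc T u) :
    Propagates G T (lseq s c u) a a :=
  propagates_of_walk (v := fun _ => a) le_rfl (Nat.zero_le _)
    (fun _ _ _ hf => Vanc_mono (prefix_of_mem_lseq hf) ha) (fun _ hr => absurd hr.2 (by simp))

def LseqPropagates (G : V → V → Prop) (T : BTree V) (v : ℕ → V) (s : BTree V) : Prop :=
  ∀ t, subtreeAt T t = some s → ∀ k i j, i ≤ j → j ≤ i + 2 ^ k →
    v i ∈ Vanc T t → v j ∈ Vanc T t → (∀ r ∈ Set.Ico i j, EUpDownDir G T t (v r) (v (r + 1))) →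
    Propagates G T (lseq s (2 ^ k) t) (v i) (v j)

theorem lseqPropagates_leaf (v : ℕ → V) (b : Set V) : LseqPropagates G T v (leaf b) := by
  intro t ht k i j hij hji _ hj hedge
  rw [lseq]
  refine propagates_of_walk hij (by simpa using hji) (fun r hr f hf => ?_)
    fun r hr => (hedge r hr).1
  rw [List.eq_of_mem_replicate hf]
  rcases hr.2.eq_or_lt with rfl | hrj
  · exact hj
  · exact (hedge r ⟨hr.1, hrj⟩).mem_Vanc_of_leaf ht

theorem lseqPropagates_node (hdec : IsBTreeDecompDir G T) {v : ℕ → V} {b : Set V} {lc rc : BTree V}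
    (hl : LseqPropagates G T v lc) (hr : LseqPropagates G T v rc) :
    LseqPropagates G T v (node b lc rc) := by
  intro t ht k i j hij hji hi hj hedge
  have hlc : subtreeAt T (t ++ [false]) = some lc := by simp [subtreeAt_append, ht, subtreeAt]
  have hrc : subtreeAt T (t ++ [true]) = some rc := by simp [subtreeAt_append, ht, subtreeAt]
  have hchild : ∀ s, t <+: t ++ [s] := fun s => List.prefix_append t [s]
  rw [lseq, Nat.log2_two_pow]
  refine sigmaSeq_universal (P := fun r => i ≤ r ∧ r ≤ j ∧ v r ∈ Vanc T t)
    (R := fun fs p q => Propagates G T fs (v p) (v q)) _ Propagates.append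
    (fun {e p q} hpq hqp hp hq hgap => ?_) k hij hji ⟨le_rfl, hij, hi⟩ ⟨hij, le_rfl, hj⟩
  obtain ⟨s, hs⟩ := hdec.exists_side_of_avoid (p := p) (q := q)
    (fun r hr => hedge r ⟨hp.1.trans hr.1, hr.2.trans_le hq.2.1⟩)
    (fun r hpr hrq hr => hgap r hpr hrq ⟨by omega, by omega, hr⟩)
  have hp' := fun s => Vanc_mono (hchild s) hp.2.2
  have hq' := fun s => Vanc_mono (hchild s) hq.2.2
  cases s
  · exact (hl _ hlc e p q hpq hqp (hp' _) (hq' _) hs).append (propagates_lseq_self (hq' true))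
  · exact (propagates_lseq_self (hp' false)).append (hr _ hrc e p q hpq hqp (hp' _) (hq' _) hs)

theorem lseqPropagates (hdec : IsBTreeDecompDir G T) (v : ℕ → V) : ∀ s, LseqPropagates G T v s
  | leaf b => lseqPropagates_leaf v b
  | node _ lc rc => lseqPropagates_node hdec (lseqPropagates hdec v lc) (lseqPropagates hdec v rc)

end Marking

theorem marked_after_lseq_general {V : Type} (G : V → V → Prop) (T : BTree V)
    (hdec : IsBTreeDecompDir G T)
    (t : List Bool) (s : BTree V) (hs : subtreeAt T t = some s)
    (d : ℕ) (hd : ∃ k : ℕ, d = 2 ^ k)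
    (M0 : Set V) (x y : V) (hx : x ∈ M0)
    (hxanc : x ∈ Vanc T t) (hyanc : y ∈ Vanc T t)
    (l : ℕ) (hld : l ≤ d) (v : ℕ → V) (hv0 : v 0 = x) (hvl : v l = y)
    (hpath : ∀ i < l, EUpDownDir G T t (v i) (v (i + 1))) :
    y ∈ (lseq s d t).foldl (markStep G T) M0 := by
  obtain ⟨k, rfl⟩ := hd
  subst hv0 hvl
  exact lseqPropagates hdec v s t hs k 0 l (Nat.zero_le l) (by simpa using hld) hxanc hyanc
    (fun r hr => hpath r hr.2) M0 hx

/-- If `x` is marked, `x, y ∈ Vanc(t)`, and there is a directed path from `x` to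
`y` of length at most `d` all of whose edges lie in `E↕(t)`, then after processing
the leaf sequence `lseq(t, d)` the vertex `y` is marked. -/
theorem marked_after_lseq {V : Type} [Fintype V] (G : V → V → Prop) (T : BTree V)
    (hdec : IsBTreeDecompDir G T)
    (t : List Bool) (s : BTree V) (hs : subtreeAt T t = some s)
    (d : ℕ) (hd : ∃ k : ℕ, d = 2 ^ k)
    (M0 : Set V) (x y : V) (hx : x ∈ M0)
    (hxanc : x ∈ Vanc T t) (hyanc : y ∈ Vanc T t)
    (l : ℕ) (hld : l ≤ d) (v : ℕ → V) (hv0 : v 0 = x) (hvl : v l = y)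
    (hpath : ∀ i < l, EUpDownDir G T t (v i) (v (i + 1))) :
    y ∈ (lseq s d t).foldl (markStep G T) M0 :=
  marked_after_lseq_general G T hdec t s hs d hd M0 x y hx hxanc hyanc l hld v hv0 hvl hpath
end
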